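/- arXiv:math/0006164 — 10 statements merged into one kernel-verified Lean document; each statement's English description precedes it below -/
import Mathlib

section
/- For integers 1 ≤ s ≤ t and t ≤ n ≤ s + t - 1, one has ∑_{i=0}^{s} (-1)^i * (C(s,i) * C(t,i) / C(n,i)) = 0. -/
/-!
Since `C(s,i) / C(n,i) = C(n-i,s-i) / C(n,s)`, the sum is `C(n,s)⁻¹ ∑ (-1)^i C(t,i) C(n-i,s-i)`.
Writing `C(n-i,s-i) = (-1)^(s-i) C(s-n-1, s-i)` with a negative upper index, the
Chu–Vandermonde identity turns this into `(-1)^s C(t+s-n-1, s) / C(n,s)`, which vanishes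
since `0 ≤ t+s-n-1 < s`.
-/

open Finset

namespace Ring

variable {R : Type*} [CommRing R] [BinomialRing R]

theorem natCast_choose_add_eq_neg_one_pow_mul_choose (m k : ℕ) :
    ((m + k).choose k : R) = (-1) ^ k * choose (-(m : R) - 1) k := by
  rw [neg_sub_left, choose_neg, show (1 + m + k - 1 : R) = ((m + k : ℕ) : R) by push_cast; ring,
    choose_natCast, Units.smul_def, Int.negOnePow_def, zpow_natCast, zsmul_eq_mul, ← mul_assoc]
  push_cast
  rw [← mul_pow]
  simp

theorem sum_range_neg_one_pow_mul_choose_mul_choose_sub {s n : ℕ} (hsn : s ≤ n) (r : R) :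
    ∑ i ∈ range (s + 1), (-1) ^ i * choose r i * ((n - i).choose (s - i) : R) =
      (-1) ^ s * choose (r + s - n - 1) s := by
  have hterm : ∀ i ∈ range (s + 1), (-1) ^ i * choose r i * ((n - i).choose (s - i) : R) =
      (-1) ^ s * (choose r i * choose (-((n - s : ℕ) : R) - 1) (s - i)) := by
    intro i hi
    have his : i ≤ s := Nat.lt_succ_iff.mp (mem_range.mp hi)
    rw [show n - i = (n - s) + (s - i) by omega, natCast_choose_add_eq_neg_one_pow_mul_choose,
      ← Nat.add_sub_cancel' his, pow_add]
    simp only [Nat.add_sub_cancel_left]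
    ring
  rw [sum_congr rfl hterm, ← mul_sum, ← Nat.sum_antidiagonal_eq_sum_range_succ
    (fun i j => choose r i * choose (-((n - s : ℕ) : R) - 1) j), ← add_choose_eq _ (.all _ _),
    Nat.cast_sub hsn]
  ring_nf

end Ring

theorem Nat.cast_choose_div_cast_choose {K : Type*} [Field K] [CharZero K] {n s i : ℕ}
    (his : i ≤ s) (hsn : s ≤ n) :
    (s.choose i : K) / n.choose i = (n - i).choose (s - i) / n.choose s := by
  have hni : (n.choose i : K) ≠ 0 := Nat.cast_ne_zero.2 (Nat.choose_pos (his.trans hsn)).ne'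
  have hns : (n.choose s : K) ≠ 0 := Nat.cast_ne_zero.2 (Nat.choose_pos hsn).ne'
  have key : (n.choose s * s.choose i : K) = n.choose i * (n - i).choose (s - i) := by
    exact_mod_cast choose_mul his
  rw [div_eq_div_iff hni hns]
  linear_combination key

theorem gauss_case_two (s t n : ℕ) (hs : 1 ≤ s) (hst : s ≤ t) (htn : t ≤ n)
    (h : n ≤ s + t - 1) :
    ∑ i ∈ Finset.range (s + 1),
        (-1 : ℚ) ^ i * ((s.choose i : ℚ) * (t.choose i) / (n.choose i)) = 0 := by
  have hsn : s ≤ n := hst.trans htn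
  have hterm : ∀ i ∈ range (s + 1),
      (-1 : ℚ) ^ i * ((s.choose i : ℚ) * (t.choose i) / (n.choose i)) =
        (-1) ^ i * Ring.choose (t : ℚ) i * ((n - i).choose (s - i) : ℚ) / n.choose s := by
    intro i hi
    rw [mul_div_right_comm, Nat.cast_choose_div_cast_choose (Nat.lt_succ_iff.mp (mem_range.mp hi))
      hsn, Ring.choose_natCast]
    ring
  have hvanish : Ring.choose ((t : ℚ) + s - n - 1) s = 0 := by
    rw [show (t : ℚ) + s - n - 1 = ((t + s - n - 1 : ℕ) : ℚ) by
      rw [Nat.sub_sub, Nat.cast_sub (by omega)]; push_cast; ring,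
      Ring.choose_natCast, Nat.choose_eq_zero_of_lt (by omega), Nat.cast_zero]
  rw [sum_congr rfl hterm, ← sum_div, Ring.sum_range_neg_one_pow_mul_choose_mul_choose_sub hsn,
    hvanish, mul_zero, zero_div]
end

section
/- For integers 1 ≤ s ≤ n ≤ t - 1, one has ∑_{i=0}^{s} (-1)^i * (C(s,i) * C(t,i) / C(n,i)) = (-1)^s * C(s+t-n-1, s) / C(n, s). -/
/-!
Since `C(s,i) / C(n,i) = C(n-i, s-i) / C(n,s)`, clearing `C(n,s)` leaves
`∑ (-1)^i C(t,i) C(n-i, s-i) = (-1)^s C(s+t-n-1, s)`. With `k = n - s`, the term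
`(-1)^(s-i) C(k + (s-i), s-i)` is the binomial coefficient `C(-(k+1), s-i)` with negative upper
index, so this is the Chu–Vandermonde identity `C(t + (-(k+1)), s) = ∑ C(t,i) C(-(k+1), s-i)`.
-/

open Finset

theorem Int.sum_antidiagonal_neg_one_pow_mul_choose_mul_choose_add (m k s : ℕ) :
    ∑ p ∈ antidiagonal s, (-1 : ℤ) ^ p.1 * (m + k + 1).choose p.1 * (k + p.2).choose p.2
      = (-1) ^ s * m.choose s := by
  have h := Ring.add_choose_eq (r := ((m + k + 1 : ℕ) : ℤ)) (s := -((k + 1 : ℕ) : ℤ)) s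
    (Commute.all _ _)
  rw [show ((m + k + 1 : ℕ) : ℤ) + -((k + 1 : ℕ) : ℤ) = m by push_cast; ring,
    Ring.choose_natCast] at h
  rw [h, mul_sum]
  refine sum_congr rfl fun p hp => ?_
  rw [HasAntidiagonal.mem_antidiagonal] at hp
  rw [Ring.choose_natCast, Ring.choose_neg, Units.smul_def, Int.coe_negOnePow_natCast,
    show ((k + 1 : ℕ) : ℤ) + p.2 - 1 = ((k + p.2 : ℕ) : ℤ) by push_cast; ring, Ring.choose_natCast,
    ← hp, pow_add]
  ring_nf
  simp

theorem gauss_case_three (s t n : ℕ) (hs : 1 ≤ s) (hsn : s ≤ n) (hnt : n ≤ t - 1) :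
    ∑ i ∈ Finset.range (s + 1),
        (-1 : ℚ) ^ i * ((s.choose i : ℚ) * (t.choose i) / (n.choose i))
      = (-1 : ℚ) ^ s * ((s + t - n - 1).choose s : ℚ) / (n.choose s) := by
  obtain ⟨k, rfl⟩ : ∃ k, n = s + k := ⟨n - s, by omega⟩
  obtain ⟨m, rfl⟩ : ∃ m, t = m + k + 1 := ⟨t - k - 1, by omega⟩
  have hterm : ∀ i ∈ range (s + 1),
      (-1 : ℚ) ^ i * ((s.choose i : ℚ) * (m + k + 1).choose i / (s + k).choose i)
        = (-1 : ℚ) ^ i * (m + k + 1).choose i * (k + (s - i)).choose (s - i)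
            / (s + k).choose s := by
    intro i hi
    have his : i ≤ s := Nat.lt_succ_iff.mp (mem_range.mp hi)
    rw [mul_comm (s.choose i : ℚ), mul_div_assoc,
      Nat.cast_choose_div_cast_choose his (Nat.le_add_right s k),
      show s + k - i = k + (s - i) by omega]
    ring
  have hvandermonde := Int.sum_antidiagonal_neg_one_pow_mul_choose_mul_choose_add m k s
  rw [Nat.sum_antidiagonal_eq_sum_range_succ_mk] at hvandermonde
  rw [sum_congr rfl hterm, ← sum_div, show s + (m + k + 1) - (s + k) - 1 = m by omega]
  exact_mod_cast congrArg (fun x : ℤ => (x : ℚ) / (s + k).choose s) hvandermonde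
end

section
/- For integers 1 ≤ d ≤ l and m ≥ 1 with k = l + m, one has ∑_{j=0}^{d} (-1)^j * j! * C(m,j) * C(d,j) * (k-j)! = d! * C(l,d) * (k-d)!. -/
open Finset

lemma key_choose_identity : ∀ (m l d : ℕ), d ≤ l →
    (∑ j ∈ Finset.range (d + 1),
      (-1 : ℤ) ^ j * (m.choose j) * ((l + m - j).choose (d - j)) : ℤ) = l.choose d := by
  intro m
  induction m with
  | zero =>
    intro l d hdl
    rw [Finset.sum_eq_single 0]
    · simp
    · intro j hj hj0
      rw [Nat.choose_eq_zero_of_lt (by omega : 0 < j)]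
      ring
    · intro h; simp at h
  | succ m ih =>
    intro l d hdl
    match d with
    | 0 => simp
    | (d + 1) =>
      rw [Finset.sum_range_succ']
      have hsplit : ∀ i ∈ Finset.range (d + 1),
          (-1 : ℤ) ^ (i+1) * ((m+1).choose (i+1)) * ((l + (m+1) - (i+1)).choose (d + 1 - (i+1)))
          = (-1 : ℤ) ^ (i+1) * (m.choose (i+1)) * (((l+1) + m - (i+1)).choose (d + 1 - (i+1)))
            - (-1 : ℤ) ^ i * (m.choose i) * ((l + m - i).choose (d - i)) := by
        intro i hi
        simp only [Finset.mem_range] at hi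
        have h1 : l + (m+1) - (i+1) = l + m - i := by omega
        have h2 : (l+1) + m - (i+1) = l + m - i := by omega
        have h3 : d + 1 - (i+1) = d - i := by omega
        rw [h1, h2, h3, Nat.choose_succ_succ]
        push_cast
        ring
      rw [Finset.sum_congr rfl hsplit, Finset.sum_sub_distrib]
      have hA : (∑ i ∈ Finset.range (d + 1),
          (-1 : ℤ) ^ (i+1) * (m.choose (i+1)) * (((l+1) + m - (i+1)).choose (d + 1 - (i+1))))
          + (-1 : ℤ) ^ 0 * ((m+1).choose 0) * ((l + (m+1) - 0).choose (d + 1 - 0))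
          = ((l+1).choose (d+1) : ℤ) := by
        have e0 : ((-1 : ℤ) ^ 0 * ((m+1).choose 0) * ((l + (m+1) - 0).choose (d + 1 - 0)))
            = (-1 : ℤ) ^ 0 * (m.choose 0) * (((l+1) + m - 0).choose (d + 1 - 0)) := by
          have : l + (m+1) - 0 = (l+1) + m - 0 := by omega
          rw [this]; norm_num
        rw [e0, ← Finset.sum_range_succ'
          (fun j => (-1 : ℤ) ^ j * (m.choose j) * (((l+1) + m - j).choose (d + 1 - j))) (d+1)]
        exact ih (l+1) (d+1) (by omega)
      have hB := ih l d (by omega)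
      have pascal : ((l+1).choose (d+1) : ℤ) = l.choose d + l.choose (d+1) := by
        rw [Nat.choose_succ_succ]; push_cast; ring
      linarith [hA, hB, pascal]

theorem initial_value_identity (l m d : ℕ) (hd : 1 ≤ d) (hdl : d ≤ l) (hm : 1 ≤ m) :
    ∑ j ∈ Finset.range (d + 1),
        (-1 : ℤ) ^ j * (j.factorial : ℤ) * (m.choose j) * (d.choose j) *
          ((l + m - j).factorial : ℤ)
      = (d.factorial : ℤ) * (l.choose d) * ((l + m - d).factorial : ℤ) := by
  have hterm : ∀ j ∈ Finset.range (d + 1),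
      (-1 : ℤ) ^ j * (j.factorial : ℤ) * (m.choose j) * (d.choose j) *
          ((l + m - j).factorial : ℤ)
      = ((-1 : ℤ) ^ j * (m.choose j) * ((l + m - j).choose (d - j))) *
          ((d.factorial : ℤ) * ((l + m - d).factorial : ℤ)) := by
    intro j hj
    simp only [Finset.mem_range] at hj
    have hjd : j ≤ d := by omega
    have h1 : d.choose j * j.factorial * (d - j).factorial = d.factorial :=
      Nat.choose_mul_factorial_mul_factorial hjd
    have h2 : (l + m - j).choose (d - j) * (d - j).factorial * ((l + m - j) - (d - j)).factorial
        = (l + m - j).factorial :=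
      Nat.choose_mul_factorial_mul_factorial (by omega)
    have h3 : (l + m - j) - (d - j) = l + m - d := by omega
    rw [h3] at h2
    have h1' : ((d.choose j : ℤ)) * (j.factorial : ℤ) * ((d - j).factorial : ℤ)
        = (d.factorial : ℤ) := by exact_mod_cast h1
    have h2' : ((l + m - j).choose (d - j) : ℤ) * ((d - j).factorial : ℤ)
        * ((l + m - d).factorial : ℤ) = ((l + m - j).factorial : ℤ) := by exact_mod_cast h2
    linear_combination ((-1 : ℤ) ^ j * (m.choose j) * ((l + m - j).choose (d - j))
        * ((l + m - d).factorial : ℤ)) * h1'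
      - ((-1 : ℤ) ^ j * (j.factorial : ℤ) * (m.choose j) * (d.choose j)) * h2'
  rw [Finset.sum_congr rfl hterm, ← Finset.sum_mul, key_choose_identity m l d hdl]
  ring
end

section
/- Let k ≥ 2 and let T = P_{1,k-1} be the set of permutations τ ∈ S_k with τ(1) = 1. Then the number of permutations π ∈ S_n avoiding every pattern in T equals (k-2)! * (k-1)^{n+2-k} for n ≥ k, and equals n! for n < k. -/
open Finset Equiv

/-- `π` contains the pattern `τ`: some increasing subsequence of `π` is
order-isomorphic to `τ`. -/
def PContains {k n : ℕ} (τ : Equiv.Perm (Fin k)) (π : Equiv.Perm (Fin n)) : Prop :=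
  ∃ f : Fin k ↪o Fin n, ∀ i j : Fin k, τ i < τ j ↔ π (f i) < π (f j)

/-- `π` avoids every pattern in `T`. -/
def PAvoids {k n : ℕ} (π : Equiv.Perm (Fin n)) (T : Set (Equiv.Perm (Fin k))) : Prop :=
  ∀ τ ∈ T, ¬ PContains τ π

/-- The coset `σ^a P_{l,m}` of the maximal parabolic subgroup of `S_k` (`k = l+m`):
`τ ∈ σ^a P_{l,m}` iff the first `l` (1-based) values of `τ` are a permutation of
`{a+1, ..., a+l}` taken modulo `k` (in 0-based terms: `(τ j - a) mod k < l`). -/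
def sigmaP (k l a : ℕ) : Set (Equiv.Perm (Fin k)) :=
  {τ | ∀ j : Fin k, (j : ℕ) < l → ((τ j : ℕ) + k - a) % k < l}

/-- The number of permutations of `S_n` avoiding every pattern in `T ⊆ S_k`. -/
noncomputable def avoidersCard (k : ℕ) (T : Set (Equiv.Perm (Fin k))) (n : ℕ) : ℕ :=
  {π : Equiv.Perm (Fin n) | PAvoids π T}.ncard

section AvoidAux

variable {k n : ℕ}

/-- the insertion of value `a` at position `0` before the pattern `e` -/
noncomputable def insPerm (a : Fin (n+1)) (e : Equiv.Perm (Fin n)) : Equiv.Perm (Fin (n+1)) :=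
  Equiv.ofBijective (fun i => Fin.cases a (fun j => a.succAbove (e j)) i)
    (Finite.injective_iff_bijective.mp (by
      intro i j h
      simp only at h
      induction i using Fin.cases with
      | zero =>
        induction j using Fin.cases with
        | zero => rfl
        | succ j =>
          simp only [Fin.cases_zero, Fin.cases_succ] at h
          exact absurd h.symm (Fin.succAbove_ne a (e j))
      | succ i =>
        induction j using Fin.cases with
        | zero =>
          simp only [Fin.cases_zero, Fin.cases_succ] at h
          exact absurd h (Fin.succAbove_ne a (e i))
        | succ j =>
          simp only [Fin.cases_succ] at h
          exact congrArg Fin.succ (e.injective (Fin.succAbove_right_injective h))))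

@[simp] lemma insPerm_zero (a : Fin (n+1)) (e : Equiv.Perm (Fin n)) : insPerm a e 0 = a := rfl

@[simp] lemma insPerm_succ (a : Fin (n+1)) (e : Equiv.Perm (Fin n)) (i : Fin n) :
    insPerm a e i.succ = a.succAbove (e i) := rfl

lemma exists_insPerm (π : Equiv.Perm (Fin (n+1))) : ∃ a e, π = insPerm a e := by
  classical
  refine ⟨π 0, ?_⟩
  have hne : ∀ i : Fin n, π i.succ ≠ π 0 := fun i h =>
    (Fin.succ_ne_zero i) (π.injective h)
  have hex : ∀ i : Fin n, ∃ j, (π 0).succAbove j = π i.succ :=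
    fun i => Fin.exists_succAbove_eq (hne i)
  choose e₀ he₀ using hex
  have hinj : Function.Injective e₀ := by
    intro i j h
    have : π i.succ = π j.succ := by rw [← he₀, ← he₀, h]
    exact Fin.succ_injective _ (π.injective this)
  refine ⟨Equiv.ofBijective e₀ (Finite.injective_iff_bijective.mp hinj), ?_⟩
  ext i
  induction i using Fin.cases with
  | zero => rfl
  | succ i => exact congrArg Fin.val (he₀ i).symm

lemma insPerm_injective :
    Function.Injective (fun p : Fin (n+1) × Equiv.Perm (Fin n) => insPerm p.1 p.2) := by
  rintro ⟨a, e⟩ ⟨b, f⟩ h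
  simp only at h
  have ha : a = b := by
    have := DFunLike.congr_fun h 0
    simpa using this
  subst ha
  have he : e = f := by
    ext i
    have := DFunLike.congr_fun h i.succ
    simp only [insPerm_succ] at this
    exact congrArg Fin.val (Fin.succAbove_right_injective this)
  rw [he]

lemma card_gt (π : Equiv.Perm (Fin (n+1))) (a : Fin (n+1)) :
    (Finset.univ.filter fun i => a < π i).card = n - (a : ℕ) := by
  classical
  have himg : Finset.image π (Finset.univ.filter fun i => a < π i) = Finset.Ioi a := by
    ext v
    simp only [Finset.mem_image, Finset.mem_filter, Finset.mem_univ, true_and,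
      Finset.mem_Ioi]
    constructor
    · rintro ⟨i, hi, rfl⟩; exact hi
    · intro hv; exact ⟨π.symm v, by simpa using hv, by simp⟩
  have := congrArg Finset.card himg
  rwa [Finset.card_image_of_injective _ π.injective, Fin.card_Ioi,
    Nat.add_sub_cancel] at this

lemma wit_iff (hk : 2 ≤ k) (h0 : 0 < k) (a : Fin (n+1)) (e : Equiv.Perm (Fin n)) :
    (∃ f : Fin k ↪o Fin (n+1), ∀ j : Fin k, j ≠ ⟨0, h0⟩ →
        insPerm a e (f ⟨0, h0⟩) < insPerm a e (f j)) ↔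
      ((∃ f : Fin k ↪o Fin n, ∀ j : Fin k, j ≠ ⟨0, h0⟩ →
        e (f ⟨0, h0⟩) < e (f j)) ∨ k - 1 ≤ n - (a : ℕ)) := by
  classical
  set z : Fin k := ⟨0, h0⟩ with hz
  have hzle : ∀ j : Fin k, z ≤ j := fun j => by simp [hz, Fin.le_def]
  constructor
  · rintro ⟨f, hf⟩
    by_cases hfz : f z = 0
    · right
      set t : Finset (Fin (n+1)) := (Finset.univ.erase z).image f with ht
      have htc : t.card = k - 1 := by
        rw [ht, Finset.card_image_of_injective _ f.injective,
          Finset.card_erase_of_mem (Finset.mem_univ z), Finset.card_univ, Fintype.card_fin]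
      have hsub : t ⊆ Finset.univ.filter fun i => a < insPerm a e i := by
        intro x hx
        rw [ht, Finset.mem_image] at hx
        obtain ⟨j, hj, rfl⟩ := hx
        rw [Finset.mem_erase] at hj
        have := hf j hj.1
        rw [hfz, insPerm_zero] at this
        simp [Finset.mem_filter, this]
      have hle := Finset.card_le_card hsub
      rwa [htc, card_gt] at hle
    · left
      have hpos : ∀ j : Fin k, f j ≠ 0 := by
        intro j h
        have : f z ≤ f j := f.monotone (hzle j)
        rw [h] at this
        exact hfz (le_antisymm this (Fin.zero_le _))
      refine ⟨OrderEmbedding.ofStrictMono (fun j => (f j).pred (hpos j))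
        (fun i j hij => Fin.pred_lt_pred_iff.mpr (f.strictMono hij)), fun j hj => ?_⟩
      have h1 := hf j hj
      have h2 : ∀ i : Fin k, f i = ((f i).pred (hpos i)).succ :=
        fun i => (Fin.succ_pred _ _).symm
      rw [h2 z, h2 j, insPerm_succ, insPerm_succ] at h1
      exact Fin.succAbove_lt_succAbove_iff.mp h1
  · rintro (⟨f, hf⟩ | hcard)
    · refine ⟨OrderEmbedding.ofStrictMono (fun j => (f j).succ)
        (fun i j hij => Fin.succ_lt_succ_iff.mpr (f.strictMono hij)), fun j hj => ?_⟩
      show insPerm a e (f z).succ < insPerm a e (f j).succ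
      rw [insPerm_succ, insPerm_succ]
      exact Fin.succAbove_lt_succAbove_iff.mpr (hf j hj)
    · have hP : k - 1 ≤ (Finset.univ.filter fun i => a < insPerm a e i).card := by
        rw [card_gt]; exact hcard
      obtain ⟨t, hts, htc⟩ := Finset.exists_subset_card_eq hP
      have h0t : (0 : Fin (n+1)) ∉ t := by
        intro h
        have := hts h
        simp only [Finset.mem_filter, insPerm_zero] at this
        exact absurd this.2 (lt_irrefl a)
      set s : Finset (Fin (n+1)) := insert 0 t with hs
      have hsc : s.card = k := by
        rw [hs, Finset.card_insert_of_notMem h0t, htc]; omega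
      refine ⟨s.orderEmbOfFin hsc, fun j hj => ?_⟩
      have hfz : s.orderEmbOfFin hsc z = 0 := by
        rw [hz, Finset.orderEmbOfFin_zero hsc h0]
        exact le_antisymm (Finset.min'_le _ _ (Finset.mem_insert_self 0 t)) (Fin.zero_le _)
      rw [hfz, insPerm_zero]
      have hmem : s.orderEmbOfFin hsc j ∈ s := Finset.orderEmbOfFin_mem s hsc j
      have hne0 : s.orderEmbOfFin hsc j ≠ 0 := by
        rw [← hfz]; exact fun h => hj ((s.orderEmbOfFin hsc).injective h)
      have hmt : s.orderEmbOfFin hsc j ∈ t := by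
        rcases Finset.mem_insert.mp hmem with h | h
        · exact absurd h hne0
        · exact h
      have hm := hts hmt
      simp only [Finset.mem_filter] at hm
      exact hm.2

lemma exists_std (v : Fin k → Fin n) (hv : Function.Injective v) :
    ∃ τ : Equiv.Perm (Fin k), ∀ i j, (τ i < τ j ↔ v i < v j) := by
  classical
  set s : Finset (Fin n) := Finset.image v Finset.univ with hs
  have hcard : s.card = k := by
    rw [hs, Finset.card_image_of_injective _ hv, Finset.card_univ, Fintype.card_fin]
  set iso := s.orderIsoOfFin hcard with hiso
  have hmem : ∀ i, v i ∈ s := fun i => Finset.mem_image_of_mem v (Finset.mem_univ i)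
  set τ₀ : Fin k → Fin k := fun i => iso.symm ⟨v i, hmem i⟩ with hτ₀
  have hinj : Function.Injective τ₀ := by
    intro i j h
    have h2 : (⟨v i, hmem i⟩ : s) = ⟨v j, hmem j⟩ := iso.symm.injective h
    exact hv (Subtype.mk_eq_mk.mp h2)
  refine ⟨Equiv.ofBijective τ₀ (Finite.injective_iff_bijective.mp hinj), fun i j => ?_⟩
  show τ₀ i < τ₀ j ↔ _
  rw [← iso.lt_iff_lt]
  simp [τ₀, Subtype.mk_lt_mk]

lemma mem_T_iff (hk : 0 < k) (τ : Equiv.Perm (Fin k)) :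
    τ ∈ sigmaP k 1 0 ↔ (τ ⟨0, hk⟩ : ℕ) = 0 := by
  unfold sigmaP
  constructor
  · intro h
    have h0 := h ⟨0, hk⟩ (by simp)
    have hlt : (τ ⟨0, hk⟩ : ℕ) < k := (τ ⟨0, hk⟩).isLt
    rw [Nat.sub_zero, Nat.add_mod_right, Nat.mod_eq_of_lt hlt] at h0
    omega
  · intro h j hj
    have : j = ⟨0, hk⟩ := Fin.ext (by simp only [Fin.val_mk]; omega)
    subst this
    have hlt : (τ ⟨0, hk⟩ : ℕ) < k := (τ ⟨0, hk⟩).isLt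
    rw [Nat.sub_zero, Nat.add_mod_right, Nat.mod_eq_of_lt hlt]
    omega

/-- key reformulation of avoidance -/
lemma pavoids_iff (hk : 0 < k) (π : Equiv.Perm (Fin n)) :
    PAvoids π (sigmaP k 1 0) ↔
      ¬ ∃ f : Fin k ↪o Fin n, ∀ j : Fin k, j ≠ ⟨0, hk⟩ → π (f ⟨0, hk⟩) < π (f j) := by
  constructor
  · intro hav ⟨f, hf⟩
    have hvinj : Function.Injective (fun i => π (f i)) :=
      π.injective.comp (f.injective)
    obtain ⟨τ, hτ⟩ := exists_std (fun i => π (f i)) hvinj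
    have hτ0 : (τ ⟨0, hk⟩ : ℕ) = 0 := by
      by_contra h0
      -- τ surjective, so some j has τ j = 0; also τ ⟨0⟩ ≤ τ j for all j
      obtain ⟨j, hj⟩ := τ.surjective ⟨0, hk⟩
      have hjne : j ≠ ⟨0, hk⟩ := by
        intro he; subst he; rw [hj] at h0; exact h0 rfl
      have : τ ⟨0, hk⟩ < τ j := (hτ _ _).mpr (hf j hjne)
      rw [hj] at this
      exact absurd this (by simp [Fin.lt_def])
    exact hav τ ((mem_T_iff hk τ).mpr hτ0) ⟨f, hτ⟩
  · intro hne τ hτ ⟨f, hf⟩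
    apply hne
    refine ⟨f, fun j hj => ?_⟩
    rw [← hf]
    have h0 : (τ ⟨0, hk⟩ : ℕ) = 0 := (mem_T_iff hk τ).mp hτ
    have : τ j ≠ τ ⟨0, hk⟩ := fun h => hj (τ.injective h)
    rw [Fin.lt_def]
    omega

def ASet (k n : ℕ) : Set (Equiv.Perm (Fin n)) := {π | PAvoids π (sigmaP k 1 0)}

lemma insPerm_mem_ASet (hk : 2 ≤ k) (h0 : 0 < k) (a : Fin (n+1)) (e : Equiv.Perm (Fin n)) :
    insPerm a e ∈ ASet k (n+1) ↔ (n - (a : ℕ) < k - 1 ∧ e ∈ ASet k n) := by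
  simp only [ASet, Set.mem_setOf_eq, pavoids_iff h0, wit_iff hk h0, not_or]
  constructor
  · rintro ⟨h1, h2⟩; exact ⟨by omega, h1⟩
  · rintro ⟨h1, h2⟩; exact ⟨h2, by omega⟩

lemma ASet_succ (hk : 2 ≤ k) :
    ASet k (n+1) = (fun p : Fin (n+1) × Equiv.Perm (Fin n) => insPerm p.1 p.2) ''
      ({a : Fin (n+1) | n - (a : ℕ) < k - 1} ×ˢ ASet k n) := by
  have h0 : 0 < k := by omega
  ext π
  obtain ⟨a, e, rfl⟩ := exists_insPerm π
  rw [insPerm_mem_ASet hk h0]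
  constructor
  · rintro ⟨h1, h2⟩
    exact ⟨(a, e), ⟨h1, h2⟩, rfl⟩
  · rintro ⟨⟨b, f⟩, ⟨h1, h2⟩, hins⟩
    obtain ⟨rfl, rfl⟩ : b = a ∧ f = e := by
      have := insPerm_injective (a₁ := (b,f)) (a₂ := (a,e)) hins
      exact ⟨congrArg Prod.fst this, congrArg Prod.snd this⟩
    exact ⟨h1, h2⟩

lemma ncard_prod {α β : Type*} (S : Set α) (T : Set β) :
    (S ×ˢ T).ncard = S.ncard * T.ncard := by
  rw [← Nat.card_coe_set_eq, ← Nat.card_coe_set_eq, ← Nat.card_coe_set_eq,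
    Nat.card_congr (Equiv.Set.prod S T), Nat.card_prod]

lemma ncard_lt_set (m : ℕ) : {b : Fin (n+1) | (b : ℕ) < m}.ncard = min (n+1) m := by
  by_cases h : m ≤ n
  · have he : {b : Fin (n+1) | (b : ℕ) < m} = ↑(Finset.Iio (⟨m, by omega⟩ : Fin (n+1))) := by
      ext b
      simp [Fin.lt_def]
    rw [he, Set.ncard_coe_finset, Fin.card_Iio]
    simp only [Fin.val_mk]
    omega
  · have he : {b : Fin (n+1) | (b : ℕ) < m} = Set.univ := by
      ext b
      simp only [Set.mem_setOf_eq, Set.mem_univ, iff_true]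
      have := b.isLt
      omega
    rw [he, Set.ncard_univ, Nat.card_eq_fintype_card, Fintype.card_fin]
    omega

lemma ncard_S (hk : 2 ≤ k) :
    {a : Fin (n+1) | n - (a : ℕ) < k - 1}.ncard = min (n+1) (k-1) := by
  have himg : {a : Fin (n+1) | n - (a : ℕ) < k - 1}
      = Fin.rev '' {b : Fin (n+1) | (b : ℕ) < k - 1} := by
    ext a
    simp only [Set.mem_image, Set.mem_setOf_eq]
    constructor
    · intro h
      refine ⟨a.rev, ?_, a.rev_rev⟩
      have hv : (a.rev : ℕ) = n - (a : ℕ) := by rw [Fin.val_rev]; omega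
      omega
    · rintro ⟨b, hb, rfl⟩
      have hv : (b.rev : ℕ) = n - (b : ℕ) := by rw [Fin.val_rev]; omega
      have := b.isLt
      omega
  rw [himg, Set.ncard_image_of_injective _ Fin.rev_injective, ncard_lt_set]

lemma ncard_ASet_succ (hk : 2 ≤ k) :
    (ASet k (n+1)).ncard = min (n+1) (k-1) * (ASet k n).ncard := by
  rw [ASet_succ hk, Set.ncard_image_of_injective _ insPerm_injective, ncard_prod,
    ncard_S hk]

lemma ncard_ASet_zero (h0 : 0 < k) : (ASet k 0).ncard = 1 := by
  have he : ASet k 0 = Set.univ := by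
    ext π
    simp only [ASet, Set.mem_setOf_eq, Set.mem_univ, iff_true]
    rw [pavoids_iff h0]
    rintro ⟨f, -⟩
    exact (f ⟨0, h0⟩).elim0
  rw [he, Set.ncard_univ, Nat.card_eq_fintype_card, Fintype.card_perm]
  simp

lemma ncard_ASet (hk : 2 ≤ k) (n : ℕ) :
    (ASet k n).ncard = ∏ j ∈ Finset.range n, min (j+1) (k-1) := by
  induction n with
  | zero => simpa using ncard_ASet_zero (by omega)
  | succ n ih => rw [ncard_ASet_succ hk, ih, Finset.prod_range_succ, mul_comm]

lemma prod_min (hk : 2 ≤ k) :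
    ∀ m, m ≤ k - 1 → (∏ j ∈ Finset.range m, min (j+1) (k-1)) = m.factorial := by
  intro m
  induction m with
  | zero => simp
  | succ m ih =>
    intro hm
    rw [Finset.prod_range_succ, ih (by omega), min_eq_left (by omega),
      Nat.factorial_succ, mul_comm]

lemma prod_ge (hk : 2 ≤ k) : ∀ n, k ≤ n →
    (∏ j ∈ Finset.range n, min (j+1) (k-1)) = (k-2).factorial * (k-1)^(n+2-k) := by
  intro n hn
  induction n, hn using Nat.le_induction with
  | base =>
    have hr : Finset.range k = Finset.range ((k-1)+1) := by
      rw [Nat.sub_add_cancel (by omega)]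
    rw [hr, Finset.prod_range_succ, prod_min hk (k-1) le_rfl, min_eq_right (by omega)]
    have h2 : k + 2 - k = 2 := by omega
    rw [h2]
    have h3 : (k-1).factorial = (k-1) * (k-2).factorial := by
      have hq : k - 1 = (k-2) + 1 := by omega
      rw [hq, Nat.factorial_succ]
    rw [h3, pow_two]
    ring
  | succ n hn ih =>
    rw [Finset.prod_range_succ, ih, min_eq_right (by omega)]
    have hq : n + 1 + 2 - k = (n + 2 - k) + 1 := by omega
    rw [hq, pow_succ]
    ring

end AvoidAux

theorem avoid_P1km1 (k : ℕ) (hk : 2 ≤ k) (n : ℕ) :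
    avoidersCard k (sigmaP k 1 0) n =
      if k ≤ n then (k - 2).factorial * (k - 1) ^ (n + 2 - k) else n.factorial := by
  have heq : avoidersCard k (sigmaP k 1 0) n = (ASet k n).ncard := rfl
  rw [heq, ncard_ASet hk]
  by_cases h : k ≤ n
  · rw [if_pos h, prod_ge hk n h]
  · rw [if_neg h, prod_min hk n (by omega)]
end

section
/- Let l, m ≥ 1, k = l + m, 0 ≤ a ≤ m, b = n - m + a, and n ≥ k. If i_1, ..., i_l are integers with a+1 ≤ i_j ≤ b for all j, then there is no permutation π ∈ S_n avoiding σ^a P_{l,m} with π(j) = i_j for j = 1, ..., l. -/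
open Finset Equiv

lemma card_filter_lt_fin (n c : ℕ) (h : c ≤ n) :
    ((Finset.univ : Finset (Fin n)).filter fun v : Fin n => (v : ℕ) < c).card = c := by
  have he : ((Finset.univ : Finset (Fin n)).filter fun v : Fin n => (v : ℕ) < c)
      = (Finset.range c).attachFin
        (fun x hx => lt_of_lt_of_le (Finset.mem_range.mp hx) h) := by
    ext v
    simp [Finset.mem_attachFin]
  rw [he, Finset.card_attachFin, Finset.card_range]

lemma card_filter_ge_fin (n c : ℕ) (h : c ≤ n) :
    ((Finset.univ : Finset (Fin n)).filter fun v : Fin n => c ≤ (v : ℕ)).card = n - c := by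
  have h1 := Finset.card_filter_add_card_filter_not
    (s := (Finset.univ : Finset (Fin n))) (p := fun v : Fin n => (v : ℕ) < c)
  simp only [not_lt, Finset.card_univ, Fintype.card_fin] at h1
  have h2 := card_filter_lt_fin n c h
  omega

lemma strictMono_fin_le {k : ℕ} {s : Fin k → ℕ} (hs : StrictMono s) (j : Fin k) :
    (j : ℕ) ≤ s j := by
  have key : ∀ v : ℕ, ∀ hv : v < k, v ≤ s ⟨v, hv⟩ := by
    intro v
    induction v with
    | zero => intro _; exact Nat.zero_le _
    | succ w ih =>
      intro hv
      have hw : w < k := by omega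
      have h1 := ih hw
      have h2 := hs (show (⟨w, hw⟩ : Fin k) < ⟨w + 1, hv⟩ by simp [Fin.lt_def])
      omega
  have := key (j : ℕ) j.isLt
  simpa using this

theorem no_avoider_with_middle_prefix (l m a n : ℕ) (hl : 1 ≤ l) (hm : 1 ≤ m)
    (ha : a ≤ m) (hn : l + m ≤ n) (i : ℕ → ℕ)
    (hi : ∀ j, 1 ≤ j → j ≤ l → a + 1 ≤ i j ∧ i j ≤ n - m + a)
    (π : Equiv.Perm (Fin n))
    (hπ : ∀ j : Fin n, (j : ℕ) < l → (π j : ℕ) + 1 = i ((j : ℕ) + 1)) :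
    ¬ PAvoids π (sigmaP (l + m) l a) := by
  intro hA
  set k := l + m with hk
  have hmn : m ≤ n := le_trans (Nat.le_add_left m l) hn
  have hln : l ≤ n := le_trans (Nat.le_add_right l m) hn
  have han : a ≤ n := le_trans ha hmn
  have hban : n - m + a ≤ n := by omega
  have hval : ∀ p : Fin n, (p : ℕ) < l → a ≤ (π p : ℕ) ∧ (π p : ℕ) < n - m + a := by
    intro p hp
    have h1 := hπ p hp
    have h2 := hi ((p : ℕ) + 1) (by omega) (by omega)
    omega
  -- the set of positions
  set S : Finset (Fin n) := Finset.univ.filter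
    (fun p : Fin n => (p : ℕ) < l ∨ ((π p : ℕ) < a ∨ n - m + a ≤ (π p : ℕ))) with hS
  have hcardQ : (Finset.univ.filter
      (fun v : Fin n => (v : ℕ) < a ∨ n - m + a ≤ (v : ℕ))).card = m := by
    rw [Finset.filter_or, Finset.card_union_of_disjoint, card_filter_lt_fin n a han,
      card_filter_ge_fin n (n - m + a) hban]
    · omega
    · rw [Finset.disjoint_filter]
      intro v _ hv1 hv2
      omega
  have hcardQπ : (Finset.univ.filter
      (fun p : Fin n => (π p : ℕ) < a ∨ n - m + a ≤ (π p : ℕ))).card = m := by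
    have hbij : (Finset.univ.filter
        (fun p : Fin n => (π p : ℕ) < a ∨ n - m + a ≤ (π p : ℕ))).card
        = (Finset.univ.filter
        (fun v : Fin n => (v : ℕ) < a ∨ n - m + a ≤ (v : ℕ))).card := by
      apply Finset.card_bij (fun p _ => π p)
      · intro p hp
        simp only [Finset.mem_filter, Finset.mem_univ, true_and] at hp ⊢
        exact hp
      · intro p _ q _ hpq
        exact π.injective hpq
      · intro v hv
        refine ⟨π.symm v, ?_, by simp⟩
        simp only [Finset.mem_filter, Finset.mem_univ, true_and] at hv ⊢
        simpa using hv
    rw [hbij, hcardQ]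
  have hScard : S.card = k := by
    rw [hS, Finset.filter_or, Finset.card_union_of_disjoint, card_filter_lt_fin n l hln,
      hcardQπ]
    rw [Finset.disjoint_filter]
    intro p _ hp1 hp2
    have := hval p hp1
    omega
  -- the value set
  set T : Finset (Fin n) := S.image π with hT
  have hTcard : T.card = k := by
    rw [hT, Finset.card_image_of_injective _ π.injective, hScard]
  set f : Fin k ↪o Fin n := S.orderEmbOfFin hScard with hf
  set g : Fin k ↪o Fin n := T.orderEmbOfFin hTcard with hg
  have hmemiff : ∀ p : Fin n, p ∈ S ↔ π p ∈ T := by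
    intro p
    constructor
    · intro hp; exact Finset.mem_image_of_mem π hp
    · intro hp
      obtain ⟨q, hq, hqe⟩ := Finset.mem_image.mp hp
      rwa [← π.injective hqe]
  set τ : Equiv.Perm (Fin k) :=
    (S.orderIsoOfFin hScard).toEquiv.trans
      ((π.subtypeEquiv hmemiff).trans (T.orderIsoOfFin hTcard).toEquiv.symm) with hτ
  have hgτ : ∀ j : Fin k, g (τ j) = π (f j) := by
    intro j
    rw [hg, ← Finset.coe_orderIsoOfFin_apply,
      show τ j = (T.orderIsoOfFin hTcard).symm
        ((π.subtypeEquiv hmemiff) ((S.orderIsoOfFin hScard) j)) from rfl,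
      OrderIso.apply_symm_apply]
    rfl
  -- f is identity on the first l indices
  have hfid : ∀ jv : ℕ, ∀ hjk : jv < k, jv < l → (f ⟨jv, hjk⟩ : ℕ) = jv := by
    intro jv
    induction jv using Nat.strong_induction_on with
    | _ jv IH =>
      intro hjk hjl
      have hle : jv ≤ (f ⟨jv, hjk⟩ : ℕ) := strictMono_fin_le
        (Fin.val_strictMono.comp f.strictMono) ⟨jv, hjk⟩
      have hmem : (⟨jv, lt_of_lt_of_le hjl hln⟩ : Fin n) ∈ S := by
        simp only [hS, Finset.mem_filter, Finset.mem_univ, true_and]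
        left; exact hjl
      have hrange : (⟨jv, lt_of_lt_of_le hjl hln⟩ : Fin n) ∈ Set.range f := by
        rw [hf, Finset.range_orderEmbOfFin]; exact hmem
      obtain ⟨i', hi'⟩ := hrange
      have hile : (i' : ℕ) ≤ jv := by
        have h3 : (i' : ℕ) ≤ (f i' : ℕ) := strictMono_fin_le
          (Fin.val_strictMono.comp f.strictMono) i'
        rw [hi'] at h3
        simpa using h3
      rcases eq_or_lt_of_le hile with heq | hlt
      · have : i' = ⟨jv, hjk⟩ := Fin.ext heq
        rw [this] at hi'
        rw [hi']
      · exfalso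
        have h4 := IH (i' : ℕ) hlt i'.isLt (lt_trans hlt hjl)
        have h5 : (f i' : ℕ) = jv := by rw [hi']
        have : (⟨(i' : ℕ), i'.isLt⟩ : Fin k) = i' := Fin.ext rfl
        rw [this] at h4
        omega
  -- bounds on τ j for j < l
  have hbound : ∀ j : Fin k, (j : ℕ) < l → a ≤ (τ j : ℕ) ∧ (τ j : ℕ) < a + l := by
    intro j hjl
    have hfj : (f j : ℕ) = (j : ℕ) := by
      have := hfid (j : ℕ) j.isLt hjl
      rwa [show (⟨(j : ℕ), j.isLt⟩ : Fin k) = j from Fin.ext rfl] at this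
    have hfjl : ((f j : Fin n) : ℕ) < l := by rw [hfj]; exact hjl
    obtain ⟨hv1, hv2⟩ := hval (f j) hfjl
    have hgτj : (g (τ j) : ℕ) = (π (f j) : ℕ) := by rw [hgτ j]
    -- lower bound: all a small values are in T, below π (f j)
    have hlow : a ≤ (τ j : ℕ) := by
      have hsub : (Finset.univ.filter fun w : Fin k => (g w : ℕ) < a) ⊆
          (Finset.univ.filter fun w : Fin k => (w : ℕ) < (τ j : ℕ)) := by
        intro w hw
        simp only [Finset.mem_filter, Finset.mem_univ, true_and] at hw ⊢
        have : (g w : Fin n) < g (τ j) := by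
          rw [Fin.lt_def, hgτj]; omega
        rw [← Fin.lt_def]
        exact g.lt_iff_lt.mp this
      have hcW : (Finset.univ.filter fun w : Fin k => (g w : ℕ) < a).card
          = ((Finset.univ : Finset (Fin n)).filter fun v : Fin n => (v : ℕ) < a).card := by
        apply Finset.card_bij (fun w _ => g w)
        · intro w hw
          simp only [Finset.mem_filter, Finset.mem_univ, true_and] at hw ⊢
          exact hw
        · intro w _ w' _ hww
          exact g.injective hww
        · intro v hv
          simp only [Finset.mem_filter, Finset.mem_univ, true_and] at hv
          have hvT : v ∈ T := by
            rw [hT]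
            refine Finset.mem_image.mpr ⟨π.symm v, ?_, by simp⟩
            simp only [hS, Finset.mem_filter, Finset.mem_univ, true_and]
            right; left; simpa using hv
          have : v ∈ Set.range g := by rw [hg, Finset.range_orderEmbOfFin]; exact hvT
          obtain ⟨w, hw⟩ := this
          refine ⟨w, ?_, by rw [hw]⟩
          simp only [Finset.mem_filter, Finset.mem_univ, true_and]
          rw [hw]; exact hv
      rw [card_filter_lt_fin n a han] at hcW
      have := Finset.card_le_card hsub
      rw [hcW, card_filter_lt_fin k (τ j : ℕ) (le_of_lt (τ j).isLt)] at this
      exact this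
    -- upper bound: all m - a large values are in T, above π (f j)
    have hupp : (τ j : ℕ) < a + l := by
      have hsub : (Finset.univ.filter fun w : Fin k => n - m + a ≤ (g w : ℕ)) ⊆
          (Finset.univ.filter fun w : Fin k => (τ j : ℕ) + 1 ≤ (w : ℕ)) := by
        intro w hw
        simp only [Finset.mem_filter, Finset.mem_univ, true_and] at hw ⊢
        have : g (τ j) < (g w : Fin n) := by
          rw [Fin.lt_def, hgτj]; omega
        have := g.lt_iff_lt.mp this
        rw [Fin.lt_def] at this
        omega
      have hcW : (Finset.univ.filter fun w : Fin k => n - m + a ≤ (g w : ℕ)).card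
          = ((Finset.univ : Finset (Fin n)).filter fun v : Fin n => n - m + a ≤ (v : ℕ)).card := by
        apply Finset.card_bij (fun w _ => g w)
        · intro w hw
          simp only [Finset.mem_filter, Finset.mem_univ, true_and] at hw ⊢
          exact hw
        · intro w _ w' _ hww
          exact g.injective hww
        · intro v hv
          simp only [Finset.mem_filter, Finset.mem_univ, true_and] at hv
          have hvT : v ∈ T := by
            rw [hT]
            refine Finset.mem_image.mpr ⟨π.symm v, ?_, by simp⟩
            simp only [hS, Finset.mem_filter, Finset.mem_univ, true_and]
            right; right; simpa using hv
          have : v ∈ Set.range g := by rw [hg, Finset.range_orderEmbOfFin]; exact hvT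
          obtain ⟨w, hw⟩ := this
          refine ⟨w, ?_, by rw [hw]⟩
          simp only [Finset.mem_filter, Finset.mem_univ, true_and]
          rw [hw]; exact hv
      rw [card_filter_ge_fin n (n - m + a) hban] at hcW
      have hcard := Finset.card_le_card hsub
      rw [hcW, card_filter_ge_fin k ((τ j : ℕ) + 1) (τ j).isLt] at hcard
      have := (τ j).isLt
      omega
    exact ⟨hlow, hupp⟩
  -- τ is in the coset
  have hτmem : τ ∈ sigmaP k l a := by
    intro j hjl
    obtain ⟨h1, h2⟩ := hbound j hjl
    have hτjk := (τ j).isLt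
    have heq : ((τ j : ℕ) + k - a) = ((τ j : ℕ) - a) + k := by omega
    rw [heq, Nat.add_mod_right, Nat.mod_eq_of_lt (by omega)]
    omega
  exact hA τ hτmem ⟨f, fun i' j' => by rw [← hgτ i', ← hgτ j']; exact (g.lt_iff_lt).symm⟩
end

section
/- Let l, m ≥ 1, k = l+m, 0 ≤ a ≤ m, b = n - m + a, n ≥ k, 1 ≤ r ≤ d ≤ l, and let i_1,...,i_d satisfy a+1 ≤ i_j ≤ b for all j ≠ r and 1 ≤ i_r ≤ a. Then the number of permutations in S_n avoiding σ^a P_{l,m} whose first d values are i_1,...,i_d equals the number of permutations in S_{n-1} avoiding σ^a P_{l,m} whose first d-1 values are i_1-1,...,i_{r-1}-1, i_{r+1}-1,...,i_d-1. -/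
open Finset Equiv

/-- `g_n(i_1,...,i_d)`: the number of permutations in `S_n` avoiding `σ^a P_{l,m}`
whose value at (1-based) position `p` equals `i p` for `1 ≤ p ≤ d` (values 1-based). -/
noncomputable def gCount (l m a n d : ℕ) (i : ℕ → ℕ) : ℕ :=
  {π : Equiv.Perm (Fin n) | PAvoids π (sigmaP (l + m) l a) ∧
    ∀ j : Fin n, (j : ℕ) < d → (π j : ℕ) + 1 = i ((j : ℕ) + 1)}.ncard

/-- `A(n,d) = ∑ g_n(i_1,...,i_d)` over all `a+1 ≤ i_1, ..., i_d ≤ b` with `b = n-m+a`. -/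
noncomputable def ACount (l m a n d : ℕ) : ℕ :=
  ∑ iv ∈ Fintype.piFinset (fun _ : Fin d => Finset.Icc (a + 1) (n - m + a)),
    gCount l m a n d (fun p => if h : p - 1 < d then iv ⟨p - 1, h⟩ else 0)


/-!
Deleting the entry `i_r` and standardizing is a bijection between the permutations of `S_n`
with prefix `i_1, …, i_d` and those of `S_{n-1}` with the shifted prefix, because every other
prefix entry exceeds `i_r`. Deletion preserves avoidance. Conversely, an occurrence of
`τ ∈ σ^a P_{l,m}` through the deleted entry would put it at a pattern position `t ≤ r ≤ l`
with `τ(t) ≤ i_r ≤ a`; but since `a ≤ m` the first `l` values of `τ` lie in `{a+1, …, a+l}`.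
-/

namespace Fin

lemma val_le_val_of_strictMono {k M : ℕ} {f : Fin k → Fin M} (hf : StrictMono f) (t : Fin k) :
    (t : ℕ) ≤ f t := by
  simpa using Finset.card_le_card_of_injOn f (s := Finset.Iio t) (t := Finset.Iio (f t))
    (fun s hs => by simpa using hf (by simpa using hs)) hf.injective.injOn

lemma val_succAbove {N : ℕ} (p : Fin (N + 1)) (x : Fin N) :
    (p.succAbove x : ℕ) = if (x : ℕ) < p then (x : ℕ) else (x : ℕ) + 1 := by
  split_ifs with h
  · rw [succAbove_of_castSucc_lt _ _ (by simpa [lt_def] using h), val_castSucc]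
  · rw [succAbove_of_le_castSucc _ _ (by simpa [le_def] using h), val_succ]

lemma val_succAbove_add_one_eq_iff {N : ℕ} (v : Fin (N + 1)) (x : Fin N) {c : ℕ}
    (hc : (v : ℕ) + 1 < c) : (v.succAbove x : ℕ) + 1 = c ↔ (x : ℕ) + 1 = c - 1 := by
  rw [val_succAbove]
  split_ifs <;> omega

end Fin

namespace Equiv.Perm

variable {N : ℕ}

def removeAt (p : Fin (N + 1)) (π : Perm (Fin (N + 1))) : Perm (Fin N) :=
  removeNone (((finSuccEquiv' p).symm.trans π).trans (finSuccEquiv' (π p)))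

def insertAt (p v : Fin (N + 1)) (σ : Perm (Fin N)) : Perm (Fin (N + 1)) :=
  ((finSuccEquiv' p).trans (optionCongr σ)).trans (finSuccEquiv' v).symm

lemma apply_succAbove (p : Fin (N + 1)) (π : Perm (Fin (N + 1))) (j : Fin N) :
    π (p.succAbove j) = (π p).succAbove (removeAt p π j) := by
  obtain ⟨y, hy⟩ := Fin.exists_succAbove_eq
    (fun h => Fin.succAbove_ne p j (π.injective h) : π (p.succAbove j) ≠ π p)
  have h : some (removeAt p π j) = some y := by
    rw [removeAt, removeNone_some] <;> simp [← hy]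
  rw [← hy, Option.some_injective _ h]

@[simp]
lemma insertAt_apply_self (p v : Fin (N + 1)) (σ : Perm (Fin N)) : insertAt p v σ p = v := by
  simp [insertAt]

@[simp]
lemma insertAt_apply_succAbove (p v : Fin (N + 1)) (σ : Perm (Fin N)) (j : Fin N) :
    insertAt p v σ (p.succAbove j) = v.succAbove (σ j) := by
  simp [insertAt]

@[simp]
lemma removeAt_insertAt (p v : Fin (N + 1)) (σ : Perm (Fin N)) :
    removeAt p (insertAt p v σ) = σ := by
  ext j
  have h := apply_succAbove p (insertAt p v σ) j
  rw [insertAt_apply_self, insertAt_apply_succAbove] at h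
  rw [Fin.succAbove_right_injective h]

lemma insertAt_removeAt (p : Fin (N + 1)) (π : Perm (Fin (N + 1))) :
    insertAt p (π p) (removeAt p π) = π := by
  ext x : 1
  rcases eq_or_ne x p with rfl | hx
  · rw [insertAt_apply_self]
  · obtain ⟨j, rfl⟩ := Fin.exists_succAbove_eq hx
    rw [insertAt_apply_succAbove, apply_succAbove]

lemma ncard_eq_of_mem_iff_removeAt_mem (p v : Fin (N + 1)) {S : Set (Perm (Fin (N + 1)))}
    {T : Set (Perm (Fin N))} (hS : ∀ π ∈ S, π p = v)
    (hST : ∀ π : Perm (Fin (N + 1)), π p = v → (π ∈ S ↔ removeAt p π ∈ T)) :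
    S.ncard = T.ncard := by
  refine Set.BijOn.ncard_eq ⟨fun π hπ => (hST π (hS π hπ)).1 hπ, ?_, fun σ hσ => ?_⟩
  · intro π₁ h₁ π₂ h₂ h
    rw [← insertAt_removeAt p π₁, ← insertAt_removeAt p π₂, hS π₁ h₁, hS π₂ h₂, h]
  · refine ⟨insertAt p v σ, ?_, removeAt_insertAt p v σ⟩
    rw [hST _ (insertAt_apply_self p v σ), removeAt_insertAt]
    exact hσ

lemma forall_lt_val_add_one_eq_iff_removeAt {p v : Fin (N + 1)} {π : Perm (Fin (N + 1))}
    (hπ : π p = v) {d : ℕ} (hpd : (p : ℕ) < d) {w : ℕ → ℕ} (hwp : w (p + 1) = v + 1)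
    (hw : ∀ j < d, j ≠ p → (v : ℕ) + 1 < w (j + 1)) :
    (∀ j : Fin (N + 1), (j : ℕ) < d → (π j : ℕ) + 1 = w (j + 1)) ↔
      ∀ j : Fin N, (j : ℕ) < d - 1 → (removeAt p π j : ℕ) + 1 = w (p.succAbove j + 1) - 1 := by
  rw [Fin.forall_iff_succAbove p]
  simp only [hπ, hwp, hpd, forall_const, true_and]
  refine forall_congr' fun j => ?_
  have hjd : (p.succAbove j : ℕ) < d ↔ (j : ℕ) < d - 1 := by
    rw [Fin.val_succAbove]
    split_ifs <;> omega
  rw [hjd, apply_succAbove, hπ]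
  exact imp_congr_right fun hj => Fin.val_succAbove_add_one_eq_iff v _
    (hw _ (hjd.2 hj) (Fin.val_injective.ne (Fin.succAbove_ne p j)))

end Equiv.Perm

open Equiv.Perm

section Patterns

variable {k N : ℕ} {τ : Perm (Fin k)}

lemma PContains.of_removeAt {p : Fin (N + 1)} {π : Perm (Fin (N + 1))}
    (h : PContains τ (removeAt p π)) : PContains τ π := by
  obtain ⟨f, hf⟩ := h
  refine ⟨f.trans p.succAboveOrderEmb, fun s t => ?_⟩
  rw [hf s t]
  simp only [RelEmbedding.coe_trans, Function.comp_apply, Fin.succAboveOrderEmb_apply,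
    apply_succAbove, Fin.succAbove_lt_succAbove_iff]

lemma PAvoids.removeAt {T : Set (Perm (Fin k))} {π : Perm (Fin (N + 1))} (h : PAvoids π T)
    (p : Fin (N + 1)) : PAvoids (removeAt p π) T :=
  fun τ hτ hc => h τ hτ hc.of_removeAt

lemma PContains.removeAt_of_ne {p : Fin (N + 1)} {π : Perm (Fin (N + 1))}
    (f : Fin k ↪o Fin (N + 1)) (hf : ∀ s t, τ s < τ t ↔ π (f s) < π (f t)) (hp : ∀ t, f t ≠ p) :
    PContains τ (removeAt p π) := by
  choose g hg using fun t => Fin.exists_succAbove_eq (hp t)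
  have hg_mono : StrictMono g := fun s t hst => by
    rw [← Fin.succAbove_lt_succAbove_iff (p := p), hg, hg]
    exact f.strictMono hst
  refine ⟨OrderEmbedding.ofStrictMono g hg_mono, fun s t => ?_⟩
  rw [hf, OrderEmbedding.coe_ofStrictMono, ← hg s, ← hg t, apply_succAbove, apply_succAbove,
    Fin.succAbove_lt_succAbove_iff]

lemma val_apply_le_of_occurrence {M : ℕ} {π : Perm (Fin M)} {f : Fin k ↪o Fin M}
    (hf : ∀ s t, τ s < τ t ↔ π (f s) < π (f t)) (t : Fin k) : (τ t : ℕ) ≤ π (f t) := by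
  have hmono : StrictMono (fun u => π (f (τ.symm u))) := fun u v huv => by
    rwa [← hf, apply_symm_apply, apply_symm_apply]
  simpa using Fin.val_le_val_of_strictMono hmono (τ t)

end Patterns

lemma le_apply_of_mem_sigmaP {l m a : ℕ} (ha : a ≤ m) {τ : Perm (Fin (l + m))}
    (hτ : τ ∈ sigmaP (l + m) l a) {t : Fin (l + m)} (ht : (t : ℕ) < l) : a ≤ τ t := by
  by_contra! h
  have := hτ t ht
  rw [Nat.mod_eq_of_lt (by omega)] at this
  omega

lemma pAvoids_sigmaP_iff_removeAt {l m a N : ℕ} (ha : a ≤ m) {p : Fin (N + 1)}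
    {π : Perm (Fin (N + 1))} (hp : (p : ℕ) < l) (hv : (π p : ℕ) < a) :
    PAvoids π (sigmaP (l + m) l a) ↔ PAvoids (removeAt p π) (sigmaP (l + m) l a) := by
  refine ⟨fun h => h.removeAt p, fun h τ hτ ⟨f, hf⟩ => ?_⟩
  by_cases hfp : ∃ t, f t = p
  · obtain ⟨t, rfl⟩ := hfp
    have ht : (t : ℕ) < l := (Fin.val_le_val_of_strictMono f.strictMono t).trans_lt hp
    have := le_apply_of_mem_sigmaP ha hτ ht
    have := val_apply_le_of_occurrence hf t
    omega
  · exact h τ hτ (.removeAt_of_ne f hf (not_exists.mp hfp))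

theorem gCount_delete_small_general (l m a n d r : ℕ)
    (ha : a ≤ m) (hn : l + m ≤ n) (hr : 1 ≤ r) (hrd : r ≤ d) (hdl : d ≤ l)
    (i : ℕ → ℕ)
    (hi : ∀ j, 1 ≤ j → j ≤ d → j ≠ r → a + 1 ≤ i j ∧ i j ≤ n - m + a)
    (hir : 1 ≤ i r) (hir' : i r ≤ a) :
    gCount l m a n d i
      = gCount l m a (n - 1) (d - 1)
          (fun p => if p < r then i p - 1 else i (p + 1) - 1) := by
  obtain ⟨N, rfl⟩ : ∃ N, n = N + 1 := ⟨n - 1, by omega⟩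
  obtain ⟨p, hp⟩ : ∃ p : Fin (N + 1), (p : ℕ) + 1 = r := ⟨⟨r - 1, by omega⟩, by simp; omega⟩
  obtain ⟨v, hv⟩ : ∃ v : Fin (N + 1), (v : ℕ) + 1 = i r := ⟨⟨i r - 1, by omega⟩, by simp; omega⟩
  have hw : ∀ j < d, j ≠ p → (v : ℕ) + 1 < i (j + 1) := fun j hj hjp => by
    have := (hi (j + 1) (by omega) (by omega) (by omega)).1
    omega
  have hshift : ∀ j : Fin N, (if (j : ℕ) + 1 < r then i (j + 1) - 1 else i (j + 1 + 1) - 1)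
      = i (p.succAbove j + 1) - 1 := fun j => by
    rw [Fin.val_succAbove]
    split_ifs <;> first | rfl | omega
  apply ncard_eq_of_mem_iff_removeAt_mem p v
  · rintro π ⟨-, hπ⟩
    ext
    have := hπ p (by omega)
    rw [hp] at this
    omega
  · intro π hπv
    refine (pAvoids_sigmaP_iff_removeAt (p := p) ha (by omega) (by rw [hπv]; omega)).and ?_
    rw [forall_lt_val_add_one_eq_iff_removeAt hπv (by omega) (by rw [hp, hv]) hw]
    simp only [hshift]
    -- the two sides differ only in `Fin (N + 1 - 1)` versus `Fin N`
    rfl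

theorem gCount_delete_small (l m a n d r : ℕ) (hl : 1 ≤ l) (hm : 1 ≤ m)
    (ha : a ≤ m) (hn : l + m ≤ n) (hr : 1 ≤ r) (hrd : r ≤ d) (hdl : d ≤ l)
    (i : ℕ → ℕ)
    (hi : ∀ j, 1 ≤ j → j ≤ d → j ≠ r → a + 1 ≤ i j ∧ i j ≤ n - m + a)
    (hir : 1 ≤ i r) (hir' : i r ≤ a) :
    gCount l m a n d i
      = gCount l m a (n - 1) (d - 1)
          (fun p => if p < r then i p - 1 else i (p + 1) - 1) :=
  gCount_delete_small_general l m a n d r ha hn hr hrd hdl i hi hir hir'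
end

section
/- Let l, m ≥ 1, k = l+m, 0 ≤ a ≤ m, b = n - m + a, n ≥ k, 1 ≤ r ≤ d ≤ l, and let i_1,...,i_d satisfy a+1 ≤ i_j ≤ b for j ≠ r and b+1 ≤ i_r ≤ n. Then the number of permutations in S_n avoiding σ^a P_{l,m} whose first d values are i_1,...,i_d equals the number of permutations in S_{n-1} avoiding σ^a P_{l,m} whose first d-1 values are i_1,...,i_{r-1}, i_{r+1},...,i_d. -/
open Finset Equiv

namespace GDel

def ins (v : ℕ) {M : ℕ} (j : Fin (M + 1)) : Fin (M + 2) :=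
  ⟨if (j : ℕ) < v then j else j + 1, by have := j.isLt; split <;> omega⟩

def del (v : ℕ) {M : ℕ} (w : Fin (M + 2)) : Fin (M + 1) :=
  ⟨if (w : ℕ) < v ∧ (w : ℕ) < M + 1 then w else w - 1, by have := w.isLt; split <;> omega⟩

lemma ins_ne {v M : ℕ} (j : Fin (M + 1)) : (ins v j : ℕ) ≠ v := by
  simp only [ins]; split <;> omega

lemma del_ins {v M : ℕ} (j : Fin (M + 1)) : del v (ins v j) = j := by
  apply Fin.ext; have := j.isLt; simp only [del, ins]; split <;> split <;> omega

lemma ins_del {v M : ℕ} (hv : v < M + 2) {w : Fin (M + 2)} (h : (w : ℕ) ≠ v) :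
    ins v (del v w) = w := by
  apply Fin.ext; have := w.isLt; simp only [del, ins]; split <;> split <;> omega

variable {M : ℕ} (p v : ℕ) (hp : p < M + 2) (hv : v < M + 2)

/-- Delete position `p` (which holds value `v`) from `π`. -/
def dperm (π : Equiv.Perm (Fin (M + 2))) (h : π ⟨p, hp⟩ = ⟨v, hv⟩) :
    Equiv.Perm (Fin (M + 1)) where
  toFun j := del v (π (ins p j))
  invFun j := del p (π.symm (ins v j))
  left_inv j := by
    show del p (π.symm (ins v (del v (π (ins p j))))) = j
    have h1 : (π (ins p j) : ℕ) ≠ v := by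
      intro hc
      have h2 : ins p j = (⟨p, hp⟩ : Fin (M + 2)) :=
        π.injective (by rw [h]; exact Fin.ext hc)
      have h3 : (ins p j : ℕ) = p := by rw [h2]
      exact ins_ne j h3
    rw [ins_del hv h1, Equiv.symm_apply_apply, del_ins]
  right_inv j := by
    show del v (π (ins p (del p (π.symm (ins v j))))) = j
    have h1 : (π.symm (ins v j) : ℕ) ≠ p := by
      intro hc
      have h2 : π.symm (ins v j) = (⟨p, hp⟩ : Fin (M + 2)) := Fin.ext hc
      have h3 : ins v j = π ⟨p, hp⟩ := by rw [← h2, Equiv.apply_symm_apply]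
      have h4 : (ins v j : ℕ) = v := by rw [h3, h]
      exact ins_ne j h4
    rw [ins_del hp h1, Equiv.apply_symm_apply, del_ins]

@[simp] lemma dperm_apply (π : Equiv.Perm (Fin (M + 2))) (h : π ⟨p, hp⟩ = ⟨v, hv⟩)
    (j : Fin (M + 1)) : dperm p v hp hv π h j = del v (π (ins p j)) := rfl

/-- Insert value `v` at position `p` into `π'`. -/
def iperm (π' : Equiv.Perm (Fin (M + 1))) : Equiv.Perm (Fin (M + 2)) where
  toFun w := if (w : ℕ) = p then ⟨v, hv⟩ else ins v (π' (del p w))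
  invFun u := if (u : ℕ) = v then ⟨p, hp⟩ else ins p (π'.symm (del v u))
  left_inv w := by
    dsimp only
    by_cases hw : (w : ℕ) = p
    · rw [if_pos hw, if_pos (show (((⟨v, hv⟩ : Fin (M + 2))) : ℕ) = v from rfl)]
      exact Fin.ext hw.symm
    · rw [if_neg hw, if_neg (ins_ne _), del_ins, Equiv.symm_apply_apply, ins_del hp hw]
  right_inv u := by
    dsimp only
    by_cases hu : (u : ℕ) = v
    · rw [if_pos hu, if_pos (show (((⟨p, hp⟩ : Fin (M + 2))) : ℕ) = p from rfl)]
      exact Fin.ext hu.symm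
    · rw [if_neg hu, if_neg (ins_ne _), del_ins, Equiv.apply_symm_apply, ins_del hv hu]

lemma iperm_apply (π' : Equiv.Perm (Fin (M + 1))) (w : Fin (M + 2)) :
    iperm p v hp hv π' w = if (w : ℕ) = p then ⟨v, hv⟩ else ins v (π' (del p w)) := rfl

lemma iperm_apply_p (π' : Equiv.Perm (Fin (M + 1))) :
    iperm p v hp hv π' ⟨p, hp⟩ = ⟨v, hv⟩ := by
  rw [iperm_apply, if_pos rfl]

lemma dperm_iperm (π' : Equiv.Perm (Fin (M + 1))) :
    dperm p v hp hv (iperm p v hp hv π') (iperm_apply_p p v hp hv π') = π' := by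
  ext j
  rw [dperm_apply, iperm_apply, if_neg (ins_ne _), del_ins, del_ins]

lemma iperm_dperm (π : Equiv.Perm (Fin (M + 2))) (h : π ⟨p, hp⟩ = ⟨v, hv⟩) :
    iperm p v hp hv (dperm p v hp hv π h) = π := by
  ext w
  rw [iperm_apply]
  by_cases hw : (w : ℕ) = p
  · have hw' : w = (⟨p, hp⟩ : Fin (M + 2)) := Fin.ext hw
    rw [if_pos hw, hw', h]
  · rw [if_neg hw, dperm_apply, ins_del hp hw]
    have h1 : (π w : ℕ) ≠ v := by
      intro hc
      have h2 : π w = π ⟨p, hp⟩ := by rw [h]; exact Fin.ext hc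
      exact hw (congrArg Fin.val (π.injective h2))
    rw [ins_del hv h1]


lemma ins_lt_ins {v M : ℕ} {j j' : Fin (M + 1)} : ins v j < ins v j' ↔ j < j' := by
  simp only [ins, Fin.lt_def]
  have := j.isLt; have := j'.isLt
  split <;> split <;> omega

lemma del_lt_del {v M : ℕ} (hv : v < M + 2) {w w' : Fin (M + 2)} (h : (w : ℕ) ≠ v)
    (h' : (w' : ℕ) ≠ v) : del v w < del v w' ↔ w < w' := by
  have := w.isLt; have := w'.isLt
  simp only [del, Fin.lt_def]
  split <;> split <;> omega

/-- `ins` as an order embedding. -/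
def insOE (v : ℕ) {M : ℕ} : Fin (M + 1) ↪o Fin (M + 2) :=
  OrderEmbedding.ofStrictMono (ins v) (fun _ _ h => ins_lt_ins.mpr h)

@[simp] lemma insOE_apply {v M : ℕ} (j : Fin (M + 1)) : insOE v j = ins v j := rfl

lemma oe_le_apply {k M : ℕ} (f : Fin k ↪o Fin M) (s : Fin k) : (s : ℕ) ≤ (f s : ℕ) := by
  induction' ht : (s : ℕ) with t ih generalizing s
  · exact Nat.zero_le _
  · have hk : t < k := by have := s.isLt; omega
    have hlt : (⟨t, hk⟩ : Fin k) < s := by simp [Fin.lt_def]; omega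
    have h2 := f.strictMono hlt
    have := ih ⟨t, hk⟩ rfl
    rw [Fin.lt_def] at h2
    omega

end GDel

open GDel

/-- Bounds on the first-block values of a pattern in `σ^a P_{l,m}`. -/
lemma sigmaP_bounds {l m a : ℕ} (ha : a ≤ m) {τ : Equiv.Perm (Fin (l + m))}
    (hτ : τ ∈ sigmaP (l + m) l a) {s : Fin (l + m)} (hs : (s : ℕ) < l) :
    a ≤ (τ s : ℕ) ∧ (τ s : ℕ) < a + l := by
  have h := hτ s hs
  have hlt := (τ s).isLt
  rcases le_or_gt a ((τ s : ℕ)) with h1 | h1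
  · have he : (τ s : ℕ) + (l + m) - a = ((τ s : ℕ) - a) + (l + m) := by omega
    rw [he, Nat.add_mod_right, Nat.mod_eq_of_lt (by omega)] at h
    omega
  · rw [Nat.mod_eq_of_lt (by omega)] at h
    omega

/-- If `π` has a huge value `v` at an early position `p`, no occurrence of a pattern
from `σ^a P_{l,m}` can use position `p`. -/
lemma nohit {l m a M p v : ℕ} (hl : 1 ≤ l) (ha : a ≤ m) (hpl : p < l)
    (hp : p < M + 2) (hv : v < M + 2) (hv2 : M + 2 + a ≤ v + m)
    {τ : Equiv.Perm (Fin (l + m))} (hτ : τ ∈ sigmaP (l + m) l a)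
    {π : Equiv.Perm (Fin (M + 2))} (hπ : π ⟨p, hp⟩ = ⟨v, hv⟩)
    (f : Fin (l + m) ↪o Fin (M + 2))
    (hf : ∀ x y : Fin (l + m), τ x < τ y ↔ π (f x) < π (f y))
    (s : Fin (l + m)) (hs : f s = ⟨p, hp⟩) : False := by
  have hsl : (s : ℕ) < l := by
    have h0 := oe_le_apply f s
    rw [hs] at h0
    have h0' : (s : ℕ) ≤ p := h0
    omega
  obtain ⟨hb1, hb2⟩ := sigmaP_bounds ha hτ hsl
  -- the set of pattern entries above `τ s`
  set B : Finset (Fin (l + m)) := Finset.univ.filter (fun t => τ s < τ t) with hB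
  have hcardB : B.card = l + m - 1 - (τ s : ℕ) := by
    rw [← Fin.card_Ioi (τ s)]
    apply Finset.card_bij' (fun t _ => τ t) (fun u _ => τ.symm u)
    · intro t ht
      simp only [hB, Finset.mem_filter] at ht
      exact Finset.mem_Ioi.mpr ht.2
    · intro u hu
      simp only [hB, Finset.mem_filter]
      refine ⟨Finset.mem_univ _, ?_⟩
      rw [Equiv.apply_symm_apply]
      exact Finset.mem_Ioi.mp hu
    · intro t _; exact Equiv.symm_apply_apply τ t
    · intro u _; exact Equiv.apply_symm_apply τ u
  have hmap : ∀ t ∈ B, π (f t) ∈ Finset.Ioi (⟨v, hv⟩ : Fin (M + 2)) := by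
    intro t ht
    simp only [hB, Finset.mem_filter] at ht
    rw [Finset.mem_Ioi, ← hπ, ← hs]
    exact (hf s t).mp ht.2
  have hinj : ∀ t ∈ B, ∀ t' ∈ B, π (f t) = π (f t') → t = t' := by
    intro t _ t' _ h
    exact f.injective (π.injective h)
  have hcard := Finset.card_le_card_of_injOn _ hmap hinj
  rw [hcardB, Fin.card_Ioi] at hcard
  have hvv : (((⟨v, hv⟩ : Fin (M + 2))) : ℕ) = v := rfl
  rw [hvv] at hcard
  omega

/-- Avoidance transfers along deletion of a huge early value. -/
lemma avoids_iff_dperm {l m a M p v : ℕ} (hl : 1 ≤ l) (ha : a ≤ m) (hpl : p < l)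
    (hp : p < M + 2) (hv : v < M + 2) (hv2 : M + 2 + a ≤ v + m)
    (π : Equiv.Perm (Fin (M + 2))) (hπ : π ⟨p, hp⟩ = ⟨v, hv⟩) :
    PAvoids π (sigmaP (l + m) l a) ↔
      PAvoids (dperm p v hp hv π hπ) (sigmaP (l + m) l a) := by
  constructor
  · intro hav τ hτ hcon
    obtain ⟨f, hf⟩ := hcon
    apply hav τ hτ
    refine ⟨f.trans (insOE p), fun x y => ?_⟩
    have hne : ∀ z : Fin (l + m), (π (ins p (f z)) : ℕ) ≠ v := by
      intro z hc
      have h2 : ins p (f z) = (⟨p, hp⟩ : Fin (M + 2)) :=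
        π.injective (by rw [hπ]; exact Fin.ext hc)
      have h3 : (ins p (f z) : ℕ) = p := by rw [h2]
      exact ins_ne (f z) h3
    have := hf x y
    rw [dperm_apply, dperm_apply, del_lt_del hv (hne x) (hne y)] at this
    simpa using this
  · intro hav τ hτ hcon
    obtain ⟨f, hf⟩ := hcon
    apply hav τ hτ
    have hfp : ∀ z : Fin (l + m), (f z : ℕ) ≠ p := by
      intro z hc
      exact nohit hl ha hpl hp hv hv2 hτ hπ f hf z (Fin.ext hc)
    refine ⟨OrderEmbedding.ofStrictMono (fun z => del p (f z))
      (fun x y h => (del_lt_del hp (hfp x) (hfp y)).mpr (f.strictMono h)), fun x y => ?_⟩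
    have hπne : ∀ z : Fin (l + m), (π (f z) : ℕ) ≠ v := by
      intro z hc
      have h2 : f z = (⟨p, hp⟩ : Fin (M + 2)) :=
        π.injective (by rw [hπ]; exact Fin.ext hc)
      have h3 : (f z : ℕ) = p := by rw [h2]
      exact hfp z h3
    have key : ∀ z : Fin (l + m),
        dperm p v hp hv π hπ (del p (f z)) = del v (π (f z)) := by
      intro z
      rw [dperm_apply, ins_del hp (hfp z)]
    show τ x < τ y ↔ dperm p v hp hv π hπ (del p (f x)) < dperm p v hp hv π hπ (del p (f y))
    rw [key x, key y, del_lt_del hv (hπne x) (hπne y)]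
    exact hf x y

theorem gCount_delete_large (l m a n d r : ℕ) (hl : 1 ≤ l) (hm : 1 ≤ m)
    (ha : a ≤ m) (hn : l + m ≤ n) (hr : 1 ≤ r) (hrd : r ≤ d) (hdl : d ≤ l)
    (i : ℕ → ℕ)
    (hi : ∀ j, 1 ≤ j → j ≤ d → j ≠ r → a + 1 ≤ i j ∧ i j ≤ n - m + a)
    (hir : n - m + a + 1 ≤ i r) (hir' : i r ≤ n) :
    gCount l m a n d i
      = gCount l m a (n - 1) (d - 1)
          (fun p => if p < r then i p else i (p + 1)) := by
  obtain ⟨N, rfl⟩ : ∃ N, n = N + 2 := ⟨n - 2, by omega⟩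
  obtain ⟨e, rfl⟩ : ∃ e, d = e + 1 := ⟨d - 1, by omega⟩
  obtain ⟨q, rfl⟩ : ∃ q, r = q + 1 := ⟨r - 1, by omega⟩
  obtain ⟨v, hv_def⟩ : ∃ v, i (q + 1) = v + 1 := ⟨i (q + 1) - 1, by omega⟩
  have hp : q < N + 2 := by omega
  have hv : v < N + 2 := by omega
  have hpl : q < l := by omega
  have hv2 : N + 2 + a ≤ v + m := by omega
  have he1 : N + 2 - 1 = N + 1 := by omega
  have he2 : e + 1 - 1 = e := by omega
  rw [he1, he2]
  unfold gCount
  have hinj : Function.Injective (iperm q v hp hv (M := N)) := by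
    intro x y hxy
    ext j
    have hx := congrArg (fun σ : Equiv.Perm (Fin (N + 1)) => σ j) (dperm_iperm q v hp hv x)
    have hy := congrArg (fun σ : Equiv.Perm (Fin (N + 1)) => σ j) (dperm_iperm q v hp hv y)
    simp only [dperm_apply] at hx hy
    rw [← hx, ← hy, hxy]
  have himg : {π : Equiv.Perm (Fin (N + 2)) | PAvoids π (sigmaP (l + m) l a) ∧
        ∀ j : Fin (N + 2), (j : ℕ) < e + 1 → (π j : ℕ) + 1 = i ((j : ℕ) + 1)}
      = iperm q v hp hv ''
        {π' : Equiv.Perm (Fin (N + 1)) | PAvoids π' (sigmaP (l + m) l a) ∧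
          ∀ j : Fin (N + 1), (j : ℕ) < e →
            (π' j : ℕ) + 1 = (fun p => if p < q + 1 then i p else i (p + 1)) ((j : ℕ) + 1)} := by
    ext π
    simp only [Set.mem_setOf_eq, Set.mem_image]
    constructor
    · rintro ⟨hav, hval⟩
      have hπval : (π ⟨q, hp⟩ : ℕ) + 1 = i (q + 1) :=
        hval ⟨q, hp⟩ (show q < e + 1 by omega)
      have hπp : π ⟨q, hp⟩ = ⟨v, hv⟩ := by
        apply Fin.ext
        show (π ⟨q, hp⟩ : ℕ) = v
        omega
      refine ⟨dperm q v hp hv π hπp, ⟨?_, ?_⟩, iperm_dperm q v hp hv π hπp⟩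
      · exact (avoids_iff_dperm hl ha hpl hp hv hv2 π hπp).mp hav
      · intro j hj
        show (dperm q v hp hv π hπp j : ℕ) + 1 =
          if (j : ℕ) + 1 < q + 1 then i ((j : ℕ) + 1) else i ((j : ℕ) + 1 + 1)
        have hdp : (dperm q v hp hv π hπp j : ℕ) = (del v (π (ins q j)) : ℕ) := rfl
        by_cases hjq : (j : ℕ) < q
        · have hw : (ins q j : ℕ) = (j : ℕ) := by
            simp only [ins]; rw [if_pos hjq]
          have h1 : (π (ins q j) : ℕ) + 1 = i ((ins q j : ℕ) + 1) :=
            hval _ (by rw [hw]; omega)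
          rw [hw] at h1
          obtain ⟨hb1, hb2⟩ := hi ((j : ℕ) + 1) (by omega) (by omega) (by omega)
          have hvval : (del v (π (ins q j)) : ℕ) = (π (ins q j) : ℕ) := by
            simp only [del]; split <;> omega
          rw [if_pos (by omega : (j : ℕ) + 1 < q + 1), hdp, hvval]
          exact h1
        · have hw : (ins q j : ℕ) = (j : ℕ) + 1 := by
            simp only [ins]; rw [if_neg hjq]
          have h1 : (π (ins q j) : ℕ) + 1 = i ((ins q j : ℕ) + 1) :=
            hval _ (by rw [hw]; omega)
          rw [hw] at h1
          obtain ⟨hb1, hb2⟩ := hi ((j : ℕ) + 2) (by omega) (by omega) (by omega)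
          have hb2' : i ((j : ℕ) + 1 + 1) ≤ N + 2 - m + a := hb2
          have hvval : (del v (π (ins q j)) : ℕ) = (π (ins q j) : ℕ) := by
            simp only [del]; split <;> omega
          rw [if_neg (by omega : ¬ (j : ℕ) + 1 < q + 1), hdp, hvval]
          exact h1
    · rintro ⟨π', ⟨hav', hval'⟩, rfl⟩
      refine ⟨?_, ?_⟩
      · have h0 := (avoids_iff_dperm hl ha hpl hp hv hv2 (iperm q v hp hv π')
          (iperm_apply_p q v hp hv π')).mpr
        rw [dperm_iperm] at h0
        exact h0 hav'
      · intro w hw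
        by_cases hwq : (w : ℕ) = q
        · have h0 : iperm q v hp hv π' w = ⟨v, hv⟩ := by
            rw [iperm_apply, if_pos hwq]
          rw [h0]
          show v + 1 = i ((w : ℕ) + 1)
          rw [hwq]
          omega
        · have hival : iperm q v hp hv π' w = ins v (π' (del q w)) := by
            rw [iperm_apply, if_neg hwq]
          by_cases hwlt : (w : ℕ) < q
          · have hd : (del q w : ℕ) = (w : ℕ) := by
              simp only [del]; split <;> omega
            have h1 := hval' (del q w) (by omega)
            rw [hd, if_pos (by omega : (w : ℕ) + 1 < q + 1)] at h1
            obtain ⟨hb1, hb2⟩ := hi ((w : ℕ) + 1) (by omega) (by omega) (by omega)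
            have hik : (ins v (π' (del q w)) : ℕ) = (π' (del q w) : ℕ) := by
              simp only [ins]; rw [if_pos (by omega)]
            rw [hival]
            show (ins v (π' (del q w)) : ℕ) + 1 = i ((w : ℕ) + 1)
            rw [hik]
            exact h1
          · have hd : (del q w : ℕ) = (w : ℕ) - 1 := by
              simp only [del]; split <;> omega
            have h1 := hval' (del q w) (by omega)
            rw [hd, if_neg (by omega : ¬ (w : ℕ) - 1 + 1 < q + 1)] at h1
            have he3 : (w : ℕ) - 1 + 1 + 1 = (w : ℕ) + 1 := by omega
            rw [he3] at h1
            obtain ⟨hb1, hb2⟩ := hi ((w : ℕ) + 1) (by omega) (by omega) (by omega)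
            have hik : (ins v (π' (del q w)) : ℕ) = (π' (del q w) : ℕ) := by
              simp only [ins]; rw [if_pos (by omega)]
            rw [hival]
            show (ins v (π' (del q w)) : ℕ) + 1 = i ((w : ℕ) + 1)
            rw [hik]
            exact h1
  rw [himg, Set.ncard_image_of_injective _ hinj]
end

section
/- For n ≥ k = l+m and f(n) the number of permutations in S_n avoiding σ^a P_{l,m} (with l,m ≥ 1 and 0 ≤ a ≤ m), one has the linear recurrence ∑_{j=0}^{l} (-1)^j j! C(m,j) C(l,j) f(n-j) = 0. -/
open Finset Equiv

/-!
A permutation avoiding `σ^a P_{l,m}` must take one of the `m` special values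
`{0, …, a-1} ∪ {n-m+a, …, n-1}` at one of its first `l` positions: otherwise the first `l`
positions together with the `m` positions carrying special values form an occurrence of a
pattern in `σ^a P_{l,m}`. Conversely, a position `< l` carrying a special value lies in no such
occurrence, so deleting a set `M` of such positions is a bijection from the avoiders with
prescribed special values on `M` onto the avoiders of length `n - |M|`. Hence
`∑_{M ⊆ [0, l)} (-1)^|M| m(m-1)⋯(m-|M|+1) f(n - |M|) = ∑_π ∑_{M ⊆ Occ π} (-1)^|M| = 0`,
where `Occ π ≠ ∅` is the set of positions `< l` of `π` carrying special values.
-/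

section General

variable {α : Type*} [LinearOrder α] {k : ℕ}

lemma Finset.orderIsoOfFin_symm_orderEmbOfFin {s : Finset α} {c : ℕ}
    (hs : #s = c) (i : Fin c) (hi : s.orderEmbOfFin hs i ∈ s) :
    (s.orderIsoOfFin hs).symm ⟨s.orderEmbOfFin hs i, hi⟩ = i := by
  rw [OrderIso.symm_apply_eq]
  exact Subtype.ext (coe_orderIsoOfFin_apply s hs i).symm

lemma Finset.exists_orderEmbOfFin_eq {s : Finset α} {c : ℕ} (hs : #s = c)
    {x : α} (hx : x ∈ s) : ∃ i, s.orderEmbOfFin hs i = x := by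
  rw [← Set.mem_range, range_orderEmbOfFin]
  exact hx

lemma Tuple.strictMono_comp_sort {f : Fin k → α} (hf : Function.Injective f) :
    StrictMono (f ∘ Tuple.sort f) :=
  (Tuple.monotone_sort f).strictMono_of_injective (hf.comp (Tuple.sort f).injective)

lemma Tuple.sort_symm_lt_sort_symm_iff {f : Fin k → α} (hf : Function.Injective f)
    (i j : Fin k) : (Tuple.sort f).symm i < (Tuple.sort f).symm j ↔ f i < f j := by
  conv_rhs => rw [← (Tuple.sort f).apply_symm_apply i, ← (Tuple.sort f).apply_symm_apply j]
  exact ((Tuple.strictMono_comp_sort hf).lt_iff_lt).symm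

lemma Tuple.orderEmbOfFin_sort_symm {f : Fin k → α} (hf : Function.Injective f)
    {s : Finset α} (hfs : ∀ i, f i ∈ s) (hs : #s = k) (i : Fin k) :
    s.orderEmbOfFin hs ((Tuple.sort f).symm i) = f i := by
  rw [← orderEmbOfFin_unique hs (fun _ => hfs _) (Tuple.strictMono_comp_sort hf)]
  simp

lemma Equiv.Perm.card_filter_apply_lt (σ : Perm (Fin k)) (i : Fin k) :
    #{r | σ r < σ i} = σ i := by
  rw [← Fin.card_Iio, ← filter_gt_eq_Iio]
  exact card_equiv σ (by simp)

lemma Equiv.Perm.eq_of_lt_iff_lt {σ σ' : Perm (Fin k)} (h : ∀ i j, σ i < σ j ↔ σ' i < σ' j) :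
    σ = σ' := by
  have hmono : Monotone (σ.symm.trans σ') := by
    refine StrictMono.monotone fun i j hij => ?_
    simpa [← h] using hij
  rw [Perm.monotone_iff] at hmono
  ext i
  simpa using congrArg Fin.val (Perm.ext_iff.mp hmono (σ i)).symm

lemma card_embedding_filter_forall {ι κ : Type*} [Fintype ι] [Fintype κ] [DecidableEq ι]
    [DecidableEq κ] (p : κ → Prop) [DecidablePred p] :
    #{χ : ι ↪ κ | ∀ q, p (χ q)} = (#{v | p v}).descFactorial (Fintype.card ι) := by
  let e : {χ : ι ↪ κ // ∀ q, p (χ q)} ≃ (ι ↪ {v // p v}) :=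
    { toFun χ := ⟨fun q => ⟨χ.1 q, χ.2 q⟩, fun q q' h => χ.1.injective (congrArg Subtype.val h)⟩
      invFun E := ⟨E.trans (Function.Embedding.subtype p), fun q => (E q).2⟩
      left_inv _ := rfl
      right_inv _ := rfl }
  rw [← Fintype.card_subtype, Fintype.card_congr e, Fintype.card_embedding_eq,
    Fintype.card_subtype]

lemma Finset.sum_powerset_card_filter_subset_smul {ι κ R : Type*} [DecidableEq κ] [AddCommMonoid R]
    {s : Finset ι} {L : Finset κ} {F : ι → Finset κ} (hF : ∀ x ∈ s, F x ⊆ L)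
    (f : Finset κ → R) :
    ∑ t ∈ L.powerset, #{x ∈ s | t ⊆ F x} • f t = ∑ x ∈ s, ∑ t ∈ (F x).powerset, f t := by
  simp_rw [← sum_const]
  refine (sum_comm' fun x t => ?_).symm
  simp only [mem_filter, mem_powerset]
  exact ⟨fun ⟨hx, ht⟩ => ⟨⟨hx, ht⟩, ht.trans (hF x hx)⟩, fun ⟨h, _⟩ => h⟩

end General

section Occurrence

variable {k n : ℕ}

def IsOccurrence (τ : Perm (Fin k)) (π : Perm (Fin n)) (g : Fin k ↪o Fin n) : Prop :=
  ∀ i j, τ i < τ j ↔ π (g i) < π (g j)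

lemma isOccurrence_one (g : Fin k ↪o Fin n) : IsOccurrence 1 1 g := fun i j => by
  simp only [Perm.one_apply, g.lt_iff_lt]

variable {τ : Perm (Fin k)} {π : Perm (Fin n)} {g : Fin k ↪o Fin n}

lemma IsOccurrence.val_eq_card (hg : IsOccurrence τ π g) (i : Fin k) :
    (τ i : ℕ) = #{r | π (g r) < π (g i)} := by
  rw [← τ.card_filter_apply_lt i]
  exact congrArg _ (filter_congr fun r _ => hg r i)

lemma IsOccurrence.val_le (hg : IsOccurrence τ π g) (i : Fin k) : (τ i : ℕ) ≤ π (g i) := by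
  rw [hg.val_eq_card, ← Fin.card_Iio, ← filter_gt_eq_Iio]
  refine card_le_card_of_injOn (fun r => π (g r)) (fun r hr => by simpa using hr) ?_
  exact fun r _ s _ h => g.injective (π.injective h)

lemma IsOccurrence.le_val (hg : IsOccurrence τ π g) {i : Fin k} {c : ℕ} (hc : c ≤ π (g i))
    (hcov : ∀ v : Fin n, (v : ℕ) < c → ∃ r, π (g r) = v) : c ≤ τ i := by
  have hcn : c ≤ n := hc.trans (π (g i)).isLt.le
  calc c = #{v : Fin n | (v : ℕ) < c} := by rw [Fin.card_filter_val_lt, min_eq_right hcn]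
    _ ≤ #{r | π (g r) < π (g i)} := by
      refine card_le_card_of_surjOn (fun r => π (g r)) fun v hv => ?_
      have hvc : (v : ℕ) < c := by simpa using hv
      obtain ⟨r, hr⟩ := hcov v hvc
      refine ⟨r, ?_, hr⟩
      rw [mem_coe, mem_filter, hr, Fin.lt_def]
      exact ⟨mem_univ _, by omega⟩
    _ = τ i := (hg.val_eq_card i).symm

lemma IsOccurrence.rev (hg : IsOccurrence τ π g) :
    IsOccurrence (τ.trans Fin.revPerm) (π.trans Fin.revPerm) g := fun i j => by
  simpa [Fin.rev_lt_rev] using hg j i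

lemma IsOccurrence.trans {m : ℕ} {ρ : Perm (Fin m)} {h : Fin m ↪o Fin k}
    (hh : IsOccurrence ρ τ h) (hg : IsOccurrence τ π g) : IsOccurrence ρ π (h.trans g) :=
  fun i j => (hh i j).trans (hg _ _)

lemma PContains.trans {m : ℕ} {ρ : Perm (Fin m)} (h₁ : PContains ρ τ) (h₂ : PContains τ π) :
    PContains ρ π :=
  let ⟨_, hh⟩ := h₁; let ⟨_, hg⟩ := h₂; ⟨_, IsOccurrence.trans hh hg⟩

end Occurrence

section Pattern

variable {k n : ℕ}

/-- The standardization of the subsequence of `π` at the positions in `s`. -/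
noncomputable def patternOn (π : Perm (Fin n)) (s : Finset (Fin n)) {c : ℕ} (hs : #s = c) :
    Perm (Fin c) :=
  (Tuple.sort (π ∘ s.orderEmbOfFin hs)).symm

variable (π : Perm (Fin n)) {s : Finset (Fin n)} {c : ℕ} (hs : #s = c)

lemma isOccurrence_patternOn : IsOccurrence (patternOn π s hs) π (s.orderEmbOfFin hs) :=
  Tuple.sort_symm_lt_sort_symm_iff (π.injective.comp (s.orderEmbOfFin hs).injective)

lemma pContains_patternOn : PContains (patternOn π s hs) π :=
  ⟨_, isOccurrence_patternOn π hs⟩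

lemma patternOn_eq_of_isOccurrence {ρ : Perm (Fin c)}
    (h : IsOccurrence ρ π (s.orderEmbOfFin hs)) : patternOn π s hs = ρ :=
  Perm.eq_of_lt_iff_lt fun i j => (isOccurrence_patternOn π hs i j).trans (h i j).symm

lemma IsOccurrence.pContains_patternOn {τ : Perm (Fin k)} {g : Fin k ↪o Fin n}
    (hg : IsOccurrence τ π g) (hgs : ∀ i, g i ∈ s) : PContains τ (patternOn π s hs) := by
  let g' : Fin k → Fin c := fun i => (s.orderIsoOfFin hs).symm ⟨g i, hgs i⟩
  have hg' : ∀ i, s.orderEmbOfFin hs (g' i) = g i := fun i => by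
    simp [g', ← coe_orderIsoOfFin_apply]
  have hmono : StrictMono g' := fun i j hij => by
    rw [← (s.orderEmbOfFin hs).lt_iff_lt, hg', hg']
    exact g.strictMono hij
  refine ⟨OrderEmbedding.ofStrictMono g' hmono, fun i j => ?_⟩
  rw [hg i j, OrderEmbedding.coe_ofStrictMono, isOccurrence_patternOn π hs, hg', hg']

end Pattern

section Split

variable {n : ℕ} (M : Finset (Fin n))

lemma card_compl_fin : #Mᶜ = n - #M := by
  rw [card_compl, Fintype.card_fin]

lemma card_compl_map_univ (χ : M ↪ Fin n) : #(univ.map χ)ᶜ = n - #M := by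
  rw [card_compl, Fintype.card_fin, card_map, card_univ, Fintype.card_coe]

/-- The permutation that agrees with `χ` on `M` and sends the positions outside `M` to the
values outside the image of `χ` in the relative order `ρ`. -/
noncomputable def glue (χ : M ↪ Fin n) (ρ : Perm (Fin (n - #M))) : Perm (Fin n) :=
  Equiv.ofBijective (fun x => if h : x ∈ M then χ ⟨x, h⟩ else
      (univ.map χ)ᶜ.orderEmbOfFin (card_compl_map_univ M χ)
        (ρ ((Mᶜ.orderIsoOfFin (card_compl_fin M)).symm ⟨x, mem_compl.2 h⟩)))
    (Finite.injective_iff_bijective.mp fun x y hxy => by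
      have hout : ∀ {z : Fin n} (hz : z ∈ M) (i : Fin (n - #M)),
          χ ⟨z, hz⟩ ≠ (univ.map χ)ᶜ.orderEmbOfFin (card_compl_map_univ M χ) i := fun hz i h =>
        mem_compl.1 (h ▸ orderEmbOfFin_mem _ _ i) (mem_map_of_mem χ (mem_univ ⟨_, hz⟩))
      by_cases hx : x ∈ M <;> by_cases hy : y ∈ M <;>
        simp only [hx, hy, dite_true, dite_false] at hxy
      · exact congrArg Subtype.val (χ.injective hxy)
      · exact (hout hx _ hxy).elim
      · exact (hout hy _ hxy.symm).elim
      · simpa using ρ.injective ((orderEmbOfFin _ _).injective hxy))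

variable {M}

lemma glue_apply_of_mem (χ : M ↪ Fin n) (ρ : Perm (Fin (n - #M))) {x : Fin n} (hx : x ∈ M) :
    glue M χ ρ x = χ ⟨x, hx⟩ :=
  dif_pos hx

lemma glue_apply_orderEmbOfFin (χ : M ↪ Fin n) (ρ : Perm (Fin (n - #M))) (i : Fin (n - #M)) :
    glue M χ ρ (Mᶜ.orderEmbOfFin (card_compl_fin M) i) =
      (univ.map χ)ᶜ.orderEmbOfFin (card_compl_map_univ M χ) (ρ i) := by
  have hi : Mᶜ.orderEmbOfFin (card_compl_fin M) i ∉ M := mem_compl.1 (orderEmbOfFin_mem _ _ i)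
  rw [glue, Equiv.ofBijective_apply, dif_neg hi, orderIsoOfFin_symm_orderEmbOfFin]

variable (M)

/-- A permutation is determined by its values on `M` and the pattern it forms off `M`. -/
noncomputable def splitEquiv : Perm (Fin n) ≃ (M ↪ Fin n) × Perm (Fin (n - #M)) where
  toFun π := ((Function.Embedding.subtype _).trans π.toEmbedding,
    patternOn π Mᶜ (card_compl_fin M))
  invFun p := glue M p.1 p.2
  left_inv π := by
    ext x
    by_cases hx : x ∈ M
    · simp [glue_apply_of_mem _ _ hx]
    obtain ⟨i, rfl⟩ := exists_orderEmbOfFin_eq (card_compl_fin M) (mem_compl.2 hx)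
    rw [glue_apply_orderEmbOfFin]
    refine congrArg Fin.val (Tuple.orderEmbOfFin_sort_symm
      (π.injective.comp (orderEmbOfFin _ _).injective) (fun j => ?_) _ i)
    simp only [Function.comp_apply, mem_compl, mem_map, mem_univ, true_and, not_exists]
    intro q hq
    have hqj : (q : Fin n) = _ := π.injective hq
    exact mem_compl.1 (orderEmbOfFin_mem _ _ j) (hqj ▸ q.2)
  right_inv p := by
    refine Prod.ext (Function.Embedding.ext fun q => glue_apply_of_mem _ _ q.2) ?_
    refine patternOn_eq_of_isOccurrence _ _ fun i j => ?_
    simp only [glue_apply_orderEmbOfFin, OrderEmbedding.lt_iff_lt]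

lemma splitEquiv_apply_fst (π : Perm (Fin n)) (q : M) : (splitEquiv M π).1 q = π q := rfl

lemma splitEquiv_apply_snd (π : Perm (Fin n)) :
    (splitEquiv M π).2 = patternOn π Mᶜ (card_compl_fin M) := rfl

end Split

section Special

variable {l m a n : ℕ}

def IsSpecial (m a : ℕ) (v : Fin n) : Prop := (v : ℕ) < a ∨ n - m + a ≤ v

instance : DecidablePred (IsSpecial (n := n) m a) := fun _ => by
  unfold IsSpecial; infer_instance

lemma card_isSpecial (ha : a ≤ m) (hmn : m ≤ n) : #{v : Fin n | IsSpecial m a v} = m := by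
  have hdisj : Disjoint ({v : Fin n | (v : ℕ) < a} : Finset (Fin n))
      ({v : Fin n | n - m + a ≤ (v : ℕ)} : Finset (Fin n)) :=
    disjoint_filter.2 fun v _ h₁ h₂ => by omega
  have hhigh : #{v : Fin n | n - m + a ≤ (v : ℕ)} = m - a := by
    have := card_filter_add_card_filter_not (s := univ) (fun v : Fin n => (v : ℕ) < n - m + a)
    simp only [not_lt, Fin.card_filter_val_lt, card_univ, Fintype.card_fin] at this
    omega
  simp only [IsSpecial, filter_or, card_union_of_disjoint hdisj, Fin.card_filter_val_lt, hhigh]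
  omega

lemma mem_sigmaP_iff (ha : a ≤ m) {τ : Perm (Fin (l + m))} :
    τ ∈ sigmaP (l + m) l a ↔ ∀ i : Fin (l + m), (i : ℕ) < l → a ≤ τ i ∧ (τ i : ℕ) < a + l := by
  refine forall_congr' fun i => imp_congr_right fun _ => ?_
  have hτi := (τ i).isLt
  rcases le_or_gt a (τ i : ℕ) with h | h
  · rw [show (τ i : ℕ) + (l + m) - a = ((τ i : ℕ) - a) + (l + m) by omega, Nat.add_mod_right,
      Nat.mod_eq_of_lt (by omega)]
    omega
  · rw [Nat.mod_eq_of_lt (by omega)]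
    omega

/-- The rank of a special value among the entries of an occurrence is `< a` or `≥ a + l`. -/
lemma IsOccurrence.not_isSpecial (ha : a ≤ m) {τ : Perm (Fin (l + m))}
    (hτ : τ ∈ sigmaP (l + m) l a) {π : Perm (Fin n)} {g : Fin (l + m) ↪o Fin n}
    (hg : IsOccurrence τ π g) {i : Fin (l + m)} (hi : (g i : ℕ) < l) :
    ¬ IsSpecial m a (π (g i)) := by
  have hil : (i : ℕ) < l := ((isOccurrence_one g).val_le i).trans_lt hi
  have hτi := (mem_sigmaP_iff ha).1 hτ i hil
  have hlow := hg.val_le i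
  have hhigh := hg.rev.val_le i
  simp only [Equiv.coe_trans, Function.comp_apply, Fin.revPerm_apply, Fin.val_rev] at hhigh
  have := (π (g i)).isLt
  unfold IsSpecial
  omega

def specialPositions (l m a : ℕ) (π : Perm (Fin n)) : Finset (Fin n) :=
  {p | (p : ℕ) < l ∧ IsSpecial m a (π p)}

lemma specialPositions_subset (π : Perm (Fin n)) :
    specialPositions l m a π ⊆ univ.filter fun p : Fin n => (p : ℕ) < l := fun p hp => by
  simp only [specialPositions, mem_filter] at hp ⊢
  exact ⟨mem_univ p, hp.2.1⟩

lemma specialPositions_nonempty (ha : a ≤ m) (hn : l + m ≤ n) {π : Perm (Fin n)}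
    (hπ : PAvoids π (sigmaP (l + m) l a)) : (specialPositions l m a π).Nonempty := by
  by_contra hempty
  have hfree : ∀ p : Fin n, (p : ℕ) < l → ¬ IsSpecial m a (π p) := fun p hp hs =>
    hempty ⟨p, by simp [specialPositions, hp, hs]⟩
  let S : Finset (Fin n) :=
    univ.filter (fun p : Fin n => (p : ℕ) < l) ∪ univ.filter (fun p => IsSpecial m a (π p))
  have hS : #S = l + m := by
    have hspec : #{p : Fin n | IsSpecial m a (π p)} = m :=
      (card_equiv π fun p => by simp).trans (card_isSpecial ha (by omega))
    rw [card_union_of_disjoint (disjoint_filter.2 fun p _ => hfree p), hspec,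
      Fin.card_filter_val_lt, min_eq_right (by omega)]
  have hmemS : ∀ p, p ∈ S ↔ (p : ℕ) < l ∨ IsSpecial m a (π p) := by simp [S]
  set g := S.orderEmbOfFin hS
  have hg : IsOccurrence _ π g := isOccurrence_patternOn π hS
  have hcov : ∀ p ∈ S, ∃ r, g r = p := fun p hp => exists_orderEmbOfFin_eq hS hp
  refine hπ _ ((mem_sigmaP_iff ha).2 fun i hi => ?_) (pContains_patternOn π hS)
  have hgi : (g i : ℕ) < l := by
    by_contra! hgi
    have := (isOccurrence_one g).le_val hgi fun p hp => hcov p ((hmemS p).2 (Or.inl hp))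
    simp only [Perm.one_apply] at this
    omega
  have hwin := hfree _ hgi
  simp only [IsSpecial, not_or, not_lt, not_le] at hwin
  constructor
  · refine hg.le_val hwin.1 fun v hv => ?_
    obtain ⟨r, hr⟩ := hcov (π.symm v) ((hmemS _).2 (Or.inr (Or.inl (by simpa using hv))))
    exact ⟨r, by simp [hr]⟩
  · have hrev := hg.rev.le_val (c := m - a) (i := i) ?_ fun v hv => ?_
    · simp only [Equiv.coe_trans, Function.comp_apply, Fin.revPerm_apply, Fin.val_rev] at hrev
      omega
    · simp only [Equiv.coe_trans, Function.comp_apply, Fin.revPerm_apply, Fin.val_rev]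
      omega
    · have hrv : n - m + a ≤ (v.rev : ℕ) := by rw [Fin.val_rev]; omega
      obtain ⟨r, hr⟩ := hcov (π.symm v.rev) ((hmemS _).2 (Or.inr (Or.inr (by simpa using hrv))))
      exact ⟨r, by simp [hr]⟩

lemma avoids_iff_avoids_patternOn_compl (ha : a ≤ m) {π : Perm (Fin n)} {M : Finset (Fin n)}
    (hM : M ⊆ specialPositions l m a π) :
    PAvoids π (sigmaP (l + m) l a) ↔
      PAvoids (patternOn π Mᶜ (card_compl_fin M)) (sigmaP (l + m) l a) := by
  constructor
  · exact fun h τ hτ hc => h τ hτ (hc.trans (pContains_patternOn π _))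
  rintro h τ hτ ⟨g, hg : IsOccurrence τ π g⟩
  refine h τ hτ (hg.pContains_patternOn π _ fun i => mem_compl.2 fun hi => ?_)
  have hspec := hM hi
  simp only [specialPositions, mem_filter, mem_univ, true_and] at hspec
  exact hg.not_isSpecial ha hτ hspec.1 hspec.2

open scoped Classical in
noncomputable def avoiders (k : ℕ) (T : Set (Perm (Fin k))) (n : ℕ) : Finset (Perm (Fin n)) :=
  {π | PAvoids π T}

lemma avoidersCard_eq_card_avoiders (k : ℕ) (T : Set (Perm (Fin k))) (n : ℕ) :
    avoidersCard k T n = #(avoiders k T n) := by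
  rw [avoidersCard, avoiders, ← Set.ncard_coe_finset, coe_filter]
  simp

lemma card_avoiders_filter_subset_specialPositions (ha : a ≤ m) (hmn : m ≤ n)
    {M : Finset (Fin n)} (hM : ∀ p ∈ M, (p : ℕ) < l) :
    #{π ∈ avoiders (l + m) (sigmaP (l + m) l a) n | M ⊆ specialPositions l m a π} =
      m.descFactorial #M * #(avoiders (l + m) (sigmaP (l + m) l a) (n - #M)) := by
  have hemb : m.descFactorial #M = #{χ : M ↪ Fin n | ∀ q, IsSpecial m a (χ q)} := by
    rw [card_embedding_filter_forall, card_isSpecial ha hmn, Fintype.card_coe]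
  rw [hemb, ← card_product]
  refine card_equiv (splitEquiv M) fun π => ?_
  have hsub : M ⊆ specialPositions l m a π ↔ ∀ q : M, IsSpecial m a (π q) := by
    simp only [subset_iff, specialPositions, mem_filter, mem_univ, true_and, Subtype.forall]
    exact ⟨fun h p hp => (h hp).2, fun h p hp => ⟨hM p hp, h p hp⟩⟩
  simp only [mem_filter, mem_product, avoiders, mem_univ, true_and, splitEquiv_apply_fst,
    splitEquiv_apply_snd]
  constructor
  · rintro ⟨hav, hMπ⟩
    exact ⟨hsub.1 hMπ, (avoids_iff_avoids_patternOn_compl ha hMπ).1 hav⟩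
  · rintro ⟨hspec, hav⟩
    exact ⟨(avoids_iff_avoids_patternOn_compl ha (hsub.2 hspec)).2 hav, hsub.2 hspec⟩

end Special

theorem avoiders_linear_recurrence_general (l m a n : ℕ)
    (ha : a ≤ m) (hn : l + m ≤ n) :
    ∑ j ∈ Finset.range (l + 1),
        (-1 : ℤ) ^ j * (j.factorial : ℤ) * (m.choose j) * (l.choose j) *
          (avoidersCard (l + m) (sigmaP (l + m) l a) (n - j) : ℤ) = 0 := by
  set T := sigmaP (l + m) l a
  let L : Finset (Fin n) := {p | (p : ℕ) < l}
  have hL : #L = l := by rw [Fin.card_filter_val_lt, min_eq_right (by omega)]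
  calc _ = ∑ M ∈ L.powerset,
        (-1 : ℤ) ^ #M * ((m.descFactorial #M * #(avoiders _ T (n - #M)) : ℕ) : ℤ) := by
        rw [sum_powerset_apply_card
          (fun j => (-1 : ℤ) ^ j * ((m.descFactorial j * #(avoiders _ T (n - j)) : ℕ) : ℤ)), hL]
        refine sum_congr rfl fun j _ => ?_
        rw [avoidersCard_eq_card_avoiders, Nat.descFactorial_eq_factorial_mul_choose, nsmul_eq_mul]
        push_cast
        ring
    _ = ∑ M ∈ L.powerset, #{π ∈ avoiders _ T n | M ⊆ specialPositions l m a π} • (-1 : ℤ) ^ #M := by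
        refine sum_congr rfl fun M hM => ?_
        rw [card_avoiders_filter_subset_specialPositions ha (by omega)
          fun p hp => by simpa [L] using mem_powerset.1 hM hp, nsmul_eq_mul]
        ring
    _ = ∑ π ∈ avoiders _ T n, ∑ M ∈ (specialPositions l m a π).powerset, (-1 : ℤ) ^ #M :=
        sum_powerset_card_filter_subset_smul (fun π _ => specialPositions_subset π) _
    _ = 0 := sum_eq_zero fun π hπ => sum_powerset_neg_one_pow_card_of_nonempty
        (specialPositions_nonempty ha hn (by simpa [avoiders] using hπ))

theorem avoiders_linear_recurrence (l m a n : ℕ) (hl : 1 ≤ l) (hm : 1 ≤ m)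
    (ha : a ≤ m) (hn : l + m ≤ n) :
    ∑ j ∈ Finset.range (l + 1),
        (-1 : ℤ) ^ j * (j.factorial : ℤ) * (m.choose j) * (l.choose j) *
          (avoidersCard (l + m) (sigmaP (l + m) l a) (n - j) : ℤ) = 0 :=
  avoiders_linear_recurrence_general l m a n ha hn
end

section
/- For k ≥ 3, the generating function for permutations avoiding P_{1,k-1} satisfies F(x) = (k-2)! x^{k-2} / (1 - (k-1)x) + ∑_{r=0}^{k-3} r! x^r. -/
open Finset Equiv

open PowerSeries

/-!
An occurrence of a pattern `τ` with `τ 0 = 0` in `π` is an entry of `π` together with `k - 1` later,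
larger entries, so `π` avoids `P_{1,k-1}` iff every entry has fewer than `k - 1` later, larger
entries. Removing the minimal entry, at position `p` of a permutation of length `n + 1`, leaves
these counts unchanged for the other entries, and the count of the minimal entry itself is
`n - p`; hence `f (n + 1) = min (n + 1) (k - 1) * f n`, and
`f n = ∏ i < n, min (i + 1) (k - 1)`, which is `n!` for `n ≤ k - 2` and
`(k - 2)! (k - 1)^(n - k + 2)` for `n ≥ k - 2`.
-/

namespace Equiv.Perm

variable {n : ℕ}

def largerAfter (π : Perm (Fin n)) (i : Fin n) : ℕ :=
  #{j | i < j ∧ π i < π j}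

def insertMin (p : Fin (n + 1)) (e : Perm (Fin n)) : Perm (Fin (n + 1)) :=
  ((finSuccEquiv' p).trans (optionCongr e)).trans (finSuccEquiv' 0).symm

@[simp] theorem insertMin_apply_self (p : Fin (n + 1)) (e : Perm (Fin n)) :
    insertMin p e p = 0 := by
  simp [insertMin, finSuccEquiv'_at]

@[simp] theorem insertMin_apply_succAbove (p : Fin (n + 1)) (e : Perm (Fin n)) (i : Fin n) :
    insertMin p e (p.succAbove i) = (e i).succ := by
  simp [insertMin, finSuccEquiv'_succAbove]

theorem insertMin_apply_ne_zero {p j : Fin (n + 1)} (e : Perm (Fin n)) (hj : j ≠ p) :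
    insertMin p e j ≠ 0 := by
  obtain ⟨i, rfl⟩ := Fin.exists_succAbove_eq hj
  simp

theorem insertMin_injective :
    Function.Injective fun pe : Fin (n + 1) × Perm (Fin n) => insertMin pe.1 pe.2 := by
  rintro ⟨p, e⟩ ⟨q, f⟩ h
  simp only at h
  obtain rfl : p = q := by
    by_contra hpq
    exact insertMin_apply_ne_zero e (Ne.symm hpq) (h ▸ insertMin_apply_self q f)
  refine Prod.ext rfl (Equiv.ext fun i => Fin.succ_injective _ ?_)
  simpa using congrArg (· (p.succAbove i)) h

theorem insertMin_bijective :
    Function.Bijective fun pe : Fin (n + 1) × Perm (Fin n) => insertMin pe.1 pe.2 := by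
  rw [Fintype.bijective_iff_injective_and_card]
  exact ⟨insertMin_injective, by simp [Fintype.card_perm, Nat.factorial_succ]⟩

theorem largerAfter_insertMin_self (p : Fin (n + 1)) (e : Perm (Fin n)) :
    largerAfter (insertMin p e) p = n - p := by
  have : ({j | p < j ∧ insertMin p e p < insertMin p e j} : Finset _) = Ioi p := by
    ext j
    simpa [Fin.pos_iff_ne_zero] using fun h : p < j => insertMin_apply_ne_zero e h.ne'
  rw [largerAfter, this, Fin.card_Ioi]
  omega

theorem largerAfter_insertMin_succAbove (p : Fin (n + 1)) (e : Perm (Fin n)) (i : Fin n) :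
    largerAfter (insertMin p e) (p.succAbove i) = largerAfter e i := by
  symm
  apply card_nbij p.succAbove
  · intro j hj
    simpa using hj
  · exact Fin.succAbove_right_injective.injOn
  · intro j hj
    simp only [coe_filter, mem_univ, true_and, Set.mem_ofPred_eq] at hj
    have hjp : j ≠ p := by
      rintro rfl
      simp at hj
    obtain ⟨j, rfl⟩ := Fin.exists_succAbove_eq hjp
    exact ⟨j, by simpa using hj, rfl⟩

theorem forall_largerAfter_insertMin_lt_iff {m : ℕ} (p : Fin (n + 1)) (e : Perm (Fin n)) :
    (∀ i, largerAfter (insertMin p e) i < m) ↔ n - p < m ∧ ∀ i, largerAfter e i < m := by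
  rw [Fin.forall_iff_succAbove p]
  simp only [largerAfter_insertMin_self, largerAfter_insertMin_succAbove]

end Equiv.Perm

open Equiv.Perm

theorem card_fin_sub_lt (n m : ℕ) : Nat.card {p : Fin (n + 1) // n - p < m} = min (n + 1) m := by
  rw [Nat.card_eq_fintype_card, Fintype.card_subtype, ← Fin.card_filter_val_lt]
  refine card_nbij' Fin.rev Fin.rev ?_ ?_ (fun p _ => Fin.rev_rev p) (fun q _ => Fin.rev_rev q) <;>
  · intro p hp
    simp only [coe_filter, mem_univ, true_and, Set.mem_ofPred_eq, Fin.val_rev] at hp ⊢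
    omega

theorem card_largerAfter_lt_succ (m n : ℕ) :
    Nat.card {π : Perm (Fin (n + 1)) // ∀ i, largerAfter π i < m}
      = min (n + 1) m * Nat.card {π : Perm (Fin n) // ∀ i, largerAfter π i < m} := by
  rw [← card_fin_sub_lt, ← Nat.card_prod]
  refine Nat.card_congr ((Equiv.subtypeEquiv (Equiv.ofBijective _ insertMin_bijective)
    fun pe => (forall_largerAfter_insertMin_lt_iff pe.1 pe.2).symm).symm.trans ?_)
  exact Equiv.subtypeProdEquivProd (p := fun p : Fin (n + 1) => n - p < m)
    (q := fun e : Perm (Fin n) => ∀ i, largerAfter e i < m)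

theorem card_largerAfter_lt (m n : ℕ) :
    Nat.card {π : Perm (Fin n) // ∀ i, largerAfter π i < m} = ∏ i ∈ range n, min (i + 1) m := by
  induction n with
  | zero => simp
  | succ n ih => rw [card_largerAfter_lt_succ, ih, prod_range_succ, mul_comm]


theorem mem_sigmaP_one_zero {m : ℕ} (τ : Perm (Fin (m + 1))) :
    τ ∈ sigmaP (m + 1) 1 0 ↔ τ 0 = 0 := by
  simp only [sigmaP, Set.mem_ofPred_eq, Nat.sub_zero, Nat.add_mod_right, Nat.lt_one_iff]
  constructor
  · intro h
    exact Fin.ext (by simpa [Nat.mod_eq_of_lt (τ 0).isLt] using h 0 rfl)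
  · rintro h j hj
    obtain rfl : j = 0 := Fin.ext hj
    simp [h]

theorem exists_perm_lt_iff_lt {k : ℕ} {α : Type*} [LinearOrder α] {g : Fin k → α}
    (hg : Function.Injective g) : ∃ τ : Perm (Fin k), ∀ a b, τ a < τ b ↔ g a < g b := by
  have hmono : StrictMono (g ∘ Tuple.sort g) :=
    (Tuple.monotone_sort g).strictMono_of_injective (hg.comp (Tuple.sort g).injective)
  refine ⟨(Tuple.sort g).symm, fun a b => ?_⟩
  conv_rhs => rw [← (Tuple.sort g).apply_symm_apply a, ← (Tuple.sort g).apply_symm_apply b]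
  exact hmono.lt_iff_lt.symm

theorem exists_pContains_fixing_zero_iff {m n : ℕ} (π : Perm (Fin n)) :
    (∃ τ : Perm (Fin (m + 1)), τ 0 = 0 ∧ PContains τ π) ↔
      ∃ f : Fin (m + 1) ↪o Fin n, ∀ a : Fin m, π (f 0) < π (f a.succ) := by
  constructor
  · rintro ⟨τ, hτ, f, hf⟩
    refine ⟨f, fun a => (hf 0 a.succ).1 ?_⟩
    rw [hτ, Fin.pos_iff_ne_zero, ← hτ]
    exact τ.injective.ne (Fin.succ_ne_zero a)
  · rintro ⟨f, hf⟩
    obtain ⟨τ, hτ⟩ := exists_perm_lt_iff_lt (π.injective.comp f.injective)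
    have hmin : ∀ b, τ 0 ≤ τ b := Fin.cases le_rfl fun a => ((hτ 0 a.succ).2 (hf a)).le
    refine ⟨τ, ?_, f, hτ⟩
    simpa using hmin (τ.symm 0)

theorem exists_orderEmbedding_iff_exists_le_largerAfter {m n : ℕ} (π : Perm (Fin n)) :
    (∃ f : Fin (m + 1) ↪o Fin n, ∀ a : Fin m, π (f 0) < π (f a.succ)) ↔
      ∃ i, m ≤ largerAfter π i := by
  constructor
  · rintro ⟨f, hf⟩
    refine ⟨f 0, ?_⟩
    have hsub : univ.map ((Fin.succEmb m).trans f.toEmbedding) ⊆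
        ({j | f 0 < j ∧ π (f 0) < π j} : Finset _) := by
      intro j hj
      obtain ⟨a, -, rfl⟩ := mem_map.1 hj
      simpa using And.intro (f.strictMono (Fin.succ_pos a)) (hf a)
    simpa [largerAfter] using card_le_card hsub
  · rintro ⟨i, hi⟩
    obtain ⟨J, hJ, hJcard⟩ := exists_subset_card_eq hi
    set e := J.orderEmbOfFin hJcard
    have hlt : ∀ a, i < e a ∧ π i < π (e a) := fun a => by
      simpa using hJ (J.orderEmbOfFin_mem hJcard a)
    refine ⟨OrderEmbedding.ofStrictMono (Fin.cons i e)
      (Fin.strictMono_cons.2 ⟨fun a => (hlt a).1, e.strictMono⟩), fun a => ?_⟩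
    simpa using (hlt a).2

theorem pAvoids_sigmaP_one_zero_iff {m n : ℕ} (π : Perm (Fin n)) :
    PAvoids π (sigmaP (m + 1) 1 0) ↔ ∀ i, largerAfter π i < m := by
  have h := (exists_pContains_fixing_zero_iff (m := m) π).trans
    (exists_orderEmbedding_iff_exists_le_largerAfter π)
  simp only [PAvoids, mem_sigmaP_one_zero]
  simpa using h.not

theorem PowerSeries.inv_one_sub_C_mul_X {k : Type*} [Field k] (a : k) :
    (1 - C a * X)⁻¹ = mk fun n => a ^ n := by
  rw [PowerSeries.inv_eq_iff_mul_eq_one (by simp)]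
  simpa [rescale_mk] using congrArg (rescale a) (mk_one_mul_one_sub_eq_one (S := k))

theorem prod_range_min_add_one_of_le {n m : ℕ} (h : n ≤ m) :
    ∏ i ∈ range n, min (i + 1) m = n.factorial := by
  rw [← prod_range_add_one_eq_factorial]
  exact prod_congr rfl fun i hi => min_eq_left (by simp at hi; omega)

theorem prod_range_min_add_one_of_ge {n K : ℕ} (h : K ≤ n) :
    ∏ i ∈ range n, min (i + 1) (K + 1) = K.factorial * (K + 1) ^ (n - K) := by
  rw [← prod_range_mul_prod_Ico _ h, prod_range_min_add_one_of_le (by omega),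
    prod_congr rfl fun i hi => min_eq_right (by simp at hi; omega), prod_const, Nat.card_Ico]

theorem generating_function_P1km1 (k : ℕ) (hk : 3 ≤ k) :
    (PowerSeries.mk fun n => (avoidersCard k (sigmaP k 1 0) n : ℚ))
      = PowerSeries.C (R := ℚ) ((k - 2).factorial : ℚ) *
            (PowerSeries.X : PowerSeries ℚ) ^ (k - 2) *
            (1 - PowerSeries.C (R := ℚ) ((k : ℚ) - 1) * PowerSeries.X)⁻¹
          + ∑ r ∈ Finset.range (k - 2),
              PowerSeries.C (R := ℚ) (r.factorial : ℚ) * (PowerSeries.X : PowerSeries ℚ) ^ r := by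
  obtain ⟨K, rfl⟩ : ∃ K, k = K + 2 := ⟨k - 2, by omega⟩
  have hcard (n : ℕ) :
      avoidersCard (K + 2) (sigmaP (K + 2) 1 0) n = ∏ i ∈ range n, min (i + 1) (K + 1) := by
    rw [avoidersCard, ← card_largerAfter_lt, ← Nat.card_coe_set_eq]
    simp_rw [pAvoids_sigmaP_one_zero_iff]
    rfl
  have ha : ((K + 2 : ℕ) : ℚ) - 1 = (K + 1 : ℕ) := by push_cast; ring
  rw [Nat.add_sub_cancel, ha, inv_one_sub_C_mul_X]
  ext n
  simp only [coeff_mk, map_add, mul_assoc, coeff_C_mul, coeff_X_pow_mul', map_sum,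
    coeff_X_pow, hcard]
  rcases lt_or_ge n K with hn | hn
  · rw [prod_range_min_add_one_of_le (by omega)]
    simp [hn, hn.not_ge]
  · rw [prod_range_min_add_one_of_ge hn]
    simp [hn, hn.not_gt]
end

section
/- For integers λ ≤ r ≤ μ - 1 with λ = min(l,m), μ = max(l,m), one has ∑_{j=0}^{λ} (-1)^j C(l,j) C(m,j) / C(r,j) = (-1)^λ (r-λ)! (l+m-r-1)! / ((μ-r-1)! r!). -/
open Finset

lemma aux_sum (l : ℕ) : ∀ a b : ℕ,
    ∑ j ∈ range (l+1),
      (-1:ℚ)^j * (l.choose j : ℚ) * ((l+a-j).factorial : ℚ) / ((l+a+b+1-j).factorial : ℚ)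
    = (-1:ℚ)^l * (a.factorial : ℚ) * ((l+b).factorial : ℚ)
        / ((b.factorial : ℚ) * ((l+a+b+1).factorial : ℚ)) := by
  induction l with
  | zero =>
    intro a b
    have hb : (b.factorial : ℚ) ≠ 0 := Nat.cast_ne_zero.2 b.factorial_ne_zero
    simp only [Finset.range_one, Finset.sum_singleton, pow_zero, Nat.choose_zero_right,
      Nat.cast_one, one_mul, zero_add, Nat.sub_zero]
    field_simp
  | succ l ih =>
    intro a b
    rw [Finset.sum_range_succ']
    have hterm : ∀ j ∈ range (l+1),
        (-1:ℚ)^(j+1) * ((l+1).choose (j+1) : ℚ) * ((l+1+a-(j+1)).factorial : ℚ)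
          / ((l+1+a+b+1-(j+1)).factorial : ℚ)
        = ((fun j => (-1:ℚ)^j * (l.choose j : ℚ) * ((l+(a+1)-j).factorial : ℚ)
              / ((l+(a+1)+b+1-j).factorial : ℚ)) (j+1))
          - ((-1:ℚ)^j * (l.choose j : ℚ) * ((l+a-j).factorial : ℚ)
            / ((l+a+b+1-j).factorial : ℚ)) := by
      intro j hj
      simp only
      have h1 : l+1+a-(j+1) = l+a-j := by omega
      have h2 : l+1+a+b+1-(j+1) = l+a+b+1-j := by omega
      have h3 : l+(a+1)-(j+1) = l+a-j := by omega
      have h4 : l+(a+1)+b+1-(j+1) = l+a+b+1-j := by omega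
      rw [h1, h2, h3, h4, Nat.choose_succ_succ]
      push_cast
      ring
    rw [Finset.sum_congr rfl hterm, Finset.sum_sub_distrib]
    have hB : ∑ j ∈ range (l+1),
        (-1:ℚ)^j * (l.choose j : ℚ) * ((l+a-j).factorial : ℚ) / ((l+a+b+1-j).factorial : ℚ)
        = (-1:ℚ)^l * (a.factorial : ℚ) * ((l+b).factorial : ℚ)
            / ((b.factorial : ℚ) * ((l+a+b+1).factorial : ℚ)) := ih a b
    have h2 := ih (a+1) b
    rw [Finset.sum_range_succ'] at h2
    rw [Finset.sum_range_succ]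
    simp only [Nat.choose_succ_self, Nat.cast_zero, mul_zero, zero_mul, zero_div, add_zero,
      Nat.choose_zero_right, Nat.cast_one, pow_zero, one_mul, mul_one, Nat.sub_zero]
    rw [hB]
    rw [show l+1+a = l+(a+1) from by omega]
    have h2' := eq_sub_of_add_eq h2
    simp only [Nat.choose_zero_right, Nat.cast_one, pow_zero, one_mul, Nat.sub_zero] at h2'
    rw [h2']
    have hb : (b.factorial : ℚ) ≠ 0 := Nat.cast_ne_zero.2 b.factorial_ne_zero
    have hc : ((l+a+b+1).factorial : ℚ) ≠ 0 := Nat.cast_ne_zero.2 (Nat.factorial_ne_zero _)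
    have hd : ((l+(a+1)).factorial : ℚ) ≠ 0 := Nat.cast_ne_zero.2 (Nat.factorial_ne_zero _)
    rw [show l+(a+1)+b+1 = (l+a+b+1)+1 from by omega, show l+1+b = (l+b)+1 from by omega]
    rw [Nat.factorial_succ (l+a+b+1), Nat.factorial_succ (l+b), Nat.factorial_succ a]
    have he : ((l+a+b+1:ℕ):ℚ)+1 ≠ 0 := by positivity
    push_cast
    field_simp
    ring

lemma aux2 (l m r : ℕ) (hlr : l ≤ r) (hrm : r < m) :
    ∑ j ∈ range (l+1),
      (-1:ℚ)^j * (l.choose j : ℚ) * ((r-j).factorial : ℚ) / ((m-j).factorial : ℚ)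
    = (-1:ℚ)^l * ((r-l).factorial : ℚ) * ((l+m-r-1).factorial : ℚ)
        / (((m-r-1).factorial : ℚ) * (m.factorial : ℚ)) := by
  have h := aux_sum l (r-l) (m-r-1)
  rw [show l+(r-l) = r from by omega] at h
  rw [show r+(m-r-1)+1 = m from by omega] at h
  rw [show l+(m-r-1) = l+m-r-1 from by omega] at h
  exact h

lemma main_le (l m r : ℕ) (hlr : l ≤ r) (hrm : r < m) :
    ∑ j ∈ Finset.range (l + 1),
        (-1 : ℚ) ^ j * ((l.choose j : ℚ) * (m.choose j)) / (r.choose j)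
    = (-1 : ℚ) ^ l * ((r - l).factorial : ℚ) * ((l + m - r - 1).factorial : ℚ) /
        (((m - r - 1).factorial : ℚ) * (r.factorial : ℚ)) := by
  have hterm : ∀ j ∈ range (l+1),
      (-1:ℚ)^j * ((l.choose j : ℚ) * (m.choose j)) / (r.choose j)
      = ((m.factorial : ℚ)/(r.factorial : ℚ)) *
        ((-1:ℚ)^j * (l.choose j : ℚ) * ((r-j).factorial : ℚ)/((m-j).factorial : ℚ)) := by
    intro j hj
    rw [Finset.mem_range] at hj
    have hjm : j ≤ m := by omega
    have hjr : j ≤ r := by omega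
    rw [Nat.cast_choose ℚ hjm, Nat.cast_choose ℚ hjr]
    have h1 : (j.factorial : ℚ) ≠ 0 := Nat.cast_ne_zero.2 (Nat.factorial_ne_zero _)
    have h2 : ((m-j).factorial : ℚ) ≠ 0 := Nat.cast_ne_zero.2 (Nat.factorial_ne_zero _)
    have h3 : ((r-j).factorial : ℚ) ≠ 0 := Nat.cast_ne_zero.2 (Nat.factorial_ne_zero _)
    have h4 : (r.factorial : ℚ) ≠ 0 := Nat.cast_ne_zero.2 (Nat.factorial_ne_zero _)
    have h5 : (m.factorial : ℚ) ≠ 0 := Nat.cast_ne_zero.2 (Nat.factorial_ne_zero _)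
    field_simp
  rw [Finset.sum_congr rfl hterm, ← Finset.mul_sum, aux2 l m r hlr hrm]
  have h4 : (r.factorial : ℚ) ≠ 0 := Nat.cast_ne_zero.2 (Nat.factorial_ne_zero _)
  have h5 : (m.factorial : ℚ) ≠ 0 := Nat.cast_ne_zero.2 (Nat.factorial_ne_zero _)
  have h6 : (((m-r-1)).factorial : ℚ) ≠ 0 := Nat.cast_ne_zero.2 (Nat.factorial_ne_zero _)
  field_simp

theorem middle_range_evaluation (l m r : ℕ) (hl : 1 ≤ l) (hm : 1 ≤ m)
    (h1 : min l m ≤ r) (h2 : r ≤ max l m - 1) :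
    ∑ j ∈ Finset.range (min l m + 1),
        (-1 : ℚ) ^ j * ((l.choose j : ℚ) * (m.choose j)) / (r.choose j)
      = (-1 : ℚ) ^ (min l m) * ((r - min l m).factorial : ℚ) *
          ((l + m - r - 1).factorial : ℚ) /
          (((max l m - r - 1).factorial : ℚ) * (r.factorial : ℚ)) := by
  rcases le_total l m with h | h
  · rw [min_eq_left h] at *
    rw [max_eq_right h] at *
    exact main_le l m r h1 (by omega)
  · rw [min_eq_right h] at *
    rw [max_eq_left h] at *
    have := main_le m l r h1 (by omega)
    rw [show m + l - r - 1 = l + m - r - 1 from by omega] at this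
    rw [← this]
    exact Finset.sum_congr rfl (fun j _ => by ring)
end
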